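/- arXiv:1111.6289 — 5 statements merged into one kernel-verified Lean document; each statement's English description precedes it below -/
import Mathlib

section
/- Let A and B be invertible matrices in M_n(ℂ), let a_1 ≥ ⋯ ≥ a_n be the eigenvalues of AA† and b_1 ≤ ⋯ ≤ b_n be the eigenvalues of BB†. Then ‖AB‖_F² ≥ Σ_{i=1}^n a_i b_i. -/
open Matrix Finset

/-- The Frobenius norm of a complex matrix. -/
noncomputable def frob {n : ℕ} (X : Matrix (Fin n) (Fin n) ℂ) : ℝ :=
  Real.sqrt (∑ i, ∑ j, ‖X i j‖ ^ 2)

private lemma diagR_conjT {n : ℕ} (d : Fin n → ℝ) :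
    (Matrix.diagonal (fun i => (d i : ℂ)))ᴴ = Matrix.diagonal (fun i => (d i : ℂ)) := by
  ext i j
  rw [Matrix.conjTranspose_apply, Matrix.diagonal_apply, Matrix.diagonal_apply]
  by_cases h : i = j
  · subst h; simp [Complex.conj_ofReal]
  · rw [if_neg h, if_neg (Ne.symm h)]; simp

private lemma diagR_mul {n : ℕ} (d e f : Fin n → ℝ) (h : ∀ i, d i * e i = f i) :
    Matrix.diagonal (fun i => (d i : ℂ)) * Matrix.diagonal (fun i => (e i : ℂ))
      = Matrix.diagonal (fun i => (f i : ℂ)) := by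
  rw [Matrix.diagonal_mul_diagonal]
  ext i j
  by_cases hij : i = j
  · subst hij; simp [Matrix.diagonal_apply_eq, ← Complex.ofReal_mul, h i]
  · simp [Matrix.diagonal_apply_ne _ hij]

private lemma diagR_mul_one {n : ℕ} (d e : Fin n → ℝ) (h : ∀ i, d i * e i = 1) :
    Matrix.diagonal (fun i => (d i : ℂ)) * Matrix.diagonal (fun i => (e i : ℂ)) = 1 := by
  rw [diagR_mul d e (fun _ => 1) h]
  simp

private lemma trace_conjT_mul {n : ℕ} (M : Matrix (Fin n) (Fin n) ℂ) :
    Matrix.trace (Mᴴ * M) = ((∑ i, ∑ j, ‖M i j‖ ^ 2 : ℝ) : ℂ) := by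
  rw [Matrix.trace]
  simp only [Matrix.diag_apply, Matrix.mul_apply, Matrix.conjTranspose_apply]
  rw [Finset.sum_comm]
  push_cast
  refine Finset.sum_congr rfl fun i _ => Finset.sum_congr rfl fun j _ => ?_
  rw [mul_comm, Complex.star_def, Complex.mul_conj, Complex.normSq_eq_norm_sq]
  push_cast
  ring

set_option maxHeartbeats 1600000 in
/-- If `A, B` are invertible, `a` lists the eigenvalues of `AAᴴ` in decreasing order and
`b` lists the eigenvalues of `BBᴴ` in increasing order, then `‖AB‖_F² ≥ ∑ aᵢ bᵢ`. -/
theorem frob_sq_mul_ge_sum_eigenvalues (n : ℕ) (A B : Matrix (Fin n) (Fin n) ℂ)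
    (hA : IsUnit A) (hB : IsUnit B) (a b : Fin n → ℝ)
    (ha : ∃ σ : Equiv.Perm (Fin n), ∀ i,
      a i = (Matrix.isHermitian_mul_conjTranspose_self A).eigenvalues (σ i))
    (hb : ∃ σ : Equiv.Perm (Fin n), ∀ i,
      b i = (Matrix.isHermitian_mul_conjTranspose_self B).eigenvalues (σ i))
    (haAnti : Antitone a) (hbMono : Monotone b) :
    ∑ i, a i * b i ≤ frob (A * B) ^ 2 := by
  classical
  obtain ⟨σA, hσA⟩ := ha
  obtain ⟨σB, hσB⟩ := hb
  set hP := Matrix.isHermitian_mul_conjTranspose_self A with hPdef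
  set hQ := Matrix.isHermitian_mul_conjTranspose_self B with hQdef
  set α : Fin n → ℝ := hP.eigenvalues with hαdef
  set β : Fin n → ℝ := hQ.eigenvalues with hβdef
  have hα0 : ∀ i, 0 ≤ α i := fun i => Matrix.eigenvalues_self_mul_conjTranspose_nonneg A i
  have hβ0 : ∀ i, 0 ≤ β i := fun i => Matrix.eigenvalues_self_mul_conjTranspose_nonneg B i
  have hdet : (A * Aᴴ).det ≠ 0 := by
    have : IsUnit (A * Aᴴ) := hA.mul ((Matrix.isUnit_conjTranspose A).mpr hA)
    exact ((Matrix.isUnit_iff_isUnit_det _).mp this).ne_zero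
  have hαpos : ∀ i, 0 < α i := by
    intro i
    rcases (hα0 i).lt_or_eq with h | h
    · exact h
    · exfalso
      apply hdet
      rw [hP.det_eq_prod_eigenvalues]
      exact Finset.prod_eq_zero (Finset.mem_univ i) (by rw [← hαdef, ← h]; simp)
  set g : Fin n → ℝ := fun i => Real.sqrt (α i) with hgdef
  have hg0 : ∀ i, 0 < g i := fun i => Real.sqrt_pos.mpr (hαpos i)
  have hgsq : ∀ i, g i * g i = α i := fun i => Real.mul_self_sqrt (hα0 i)
  set gi : Fin n → ℝ := fun i => (g i)⁻¹ with hgidef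
  set U : Matrix (Fin n) (Fin n) ℂ := (hP.eigenvectorUnitary : Matrix (Fin n) (Fin n) ℂ)
    with hUdef
  set V : Matrix (Fin n) (Fin n) ℂ := (hQ.eigenvectorUnitary : Matrix (Fin n) (Fin n) ℂ)
    with hVdef
  set Dα : Matrix (Fin n) (Fin n) ℂ := diagonal (fun i => (α i : ℂ)) with hDαdef
  set Dβ : Matrix (Fin n) (Fin n) ℂ := diagonal (fun i => (β i : ℂ)) with hDβdef
  set Dg : Matrix (Fin n) (Fin n) ℂ := diagonal (fun i => (g i : ℂ)) with hDgdef
  set Dgi : Matrix (Fin n) (Fin n) ℂ := diagonal (fun i => (gi i : ℂ)) with hDgidef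
  have hU1 : U * Uᴴ = 1 := by
    rw [← Matrix.star_eq_conjTranspose]
    exact Matrix.mem_unitaryGroup_iff.mp hP.eigenvectorUnitary.2
  have hU1' : Uᴴ * U = 1 := by
    rw [← Matrix.star_eq_conjTranspose]
    exact Matrix.mem_unitaryGroup_iff'.mp hP.eigenvectorUnitary.2
  have hV1 : V * Vᴴ = 1 := by
    rw [← Matrix.star_eq_conjTranspose]
    exact Matrix.mem_unitaryGroup_iff.mp hQ.eigenvectorUnitary.2
  have hdiagA : Uᴴ * (A * Aᴴ) * U = Dα := by
    have h := hP.conjStarAlgAut_star_eigenvectorUnitary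
    rw [Unitary.conjStarAlgAut_star_apply] at h
    rw [← Matrix.star_eq_conjTranspose]; exact h
  have hBB : B * Bᴴ = V * Dβ * Vᴴ := by
    have h := hQ.spectral_theorem
    rw [Unitary.conjStarAlgAut_apply] at h
    rw [← Matrix.star_eq_conjTranspose]; exact h
  have hDgiH : Dgiᴴ = Dgi := diagR_conjT gi
  have hDgH : Dgᴴ = Dg := diagR_conjT g
  set T : Matrix (Fin n) (Fin n) ℂ := Dgi * Uᴴ * A with hTdef
  have hTH : Tᴴ = Aᴴ * U * Dgi := by
    rw [hTdef]
    simp only [Matrix.conjTranspose_mul, Matrix.conjTranspose_conjTranspose, hDgiH,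
      Matrix.mul_assoc]
  have hTT : T * Tᴴ = 1 := by
    have e : T * Tᴴ = Dgi * (Uᴴ * (A * Aᴴ) * U) * Dgi := by
      rw [hTH, hTdef]
      simp only [Matrix.mul_assoc]
    rw [e, hdiagA, hDαdef, hDgidef]
    rw [diagR_mul gi α (fun i => gi i * α i) (fun i => rfl)]
    refine diagR_mul_one _ _ fun i => ?_
    rw [hgidef, ← hgsq i]
    calc (g i)⁻¹ * (g i * g i) * (g i)⁻¹
        = ((g i)⁻¹ * g i) * (g i * (g i)⁻¹) := by ring
      _ = 1 := by rw [inv_mul_cancel₀ (hg0 i).ne', mul_inv_cancel₀ (hg0 i).ne', one_mul]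
  have hTT' : Tᴴ * T = 1 := mul_eq_one_comm.mp hTT
  have hDgDgi : Dg * Dgi = 1 := by
    rw [hDgdef, hDgidef]
    exact diagR_mul_one _ _ fun i => mul_inv_cancel₀ (hg0 i).ne'
  have hAeq : A = U * Dg * T := by
    have : U * Dg * T = A := by
      rw [hTdef]
      calc U * Dg * (Dgi * Uᴴ * A) = U * (Dg * Dgi) * (Uᴴ * A) := by
            simp only [Matrix.mul_assoc]
        _ = U * Uᴴ * A := by rw [hDgDgi, Matrix.mul_one, Matrix.mul_assoc]
        _ = A := by rw [hU1, Matrix.one_mul]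
    exact this.symm
  have hDgDg : Dg * Dg = Dα := by
    rw [hDgdef, hDαdef]
    exact diagR_mul _ _ _ hgsq
  have hATA : Aᴴ * A = Tᴴ * Dα * T := by
    conv_lhs => rw [hAeq]
    calc (U * Dg * T)ᴴ * (U * Dg * T)
        = Tᴴ * Dgᴴ * (Uᴴ * U) * (Dg * T) := by
          simp only [Matrix.conjTranspose_mul, Matrix.mul_assoc]
      _ = Tᴴ * (Dg * Dg) * T := by
          rw [hU1', Matrix.mul_one, hDgH]
          simp only [Matrix.mul_assoc]
      _ = Tᴴ * Dα * T := by rw [hDgDg]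
  set W : Matrix (Fin n) (Fin n) ℂ := T * V with hWdef
  have hWH : Wᴴ = Vᴴ * Tᴴ := by rw [hWdef, Matrix.conjTranspose_mul]
  have hWW : W * Wᴴ = 1 := by
    rw [hWdef, hWH]
    calc T * V * (Vᴴ * Tᴴ) = T * (V * Vᴴ) * Tᴴ := by simp only [Matrix.mul_assoc]
      _ = 1 := by rw [hV1, Matrix.mul_one, hTT]
  have hWW' : Wᴴ * W = 1 := mul_eq_one_comm.mp hWW
  set S : Matrix (Fin n) (Fin n) ℝ := fun i j => Complex.normSq (W i j) with hSdef
  -- trace chain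
  have htrace2 : Matrix.trace ((A * B)ᴴ * (A * B)) = Matrix.trace (Dα * W * Dβ * Wᴴ) := by
    calc Matrix.trace ((A * B)ᴴ * (A * B))
        = Matrix.trace (Bᴴ * (Tᴴ * Dα * T * B)) := by
          rw [Matrix.conjTranspose_mul]
          congr 1
          rw [← hATA]
          simp only [Matrix.mul_assoc]
      _ = Matrix.trace ((Tᴴ * Dα * T * B) * Bᴴ) := Matrix.trace_mul_comm _ _
      _ = Matrix.trace (Tᴴ * (Dα * T * (B * Bᴴ))) := by
          congr 1
          simp only [Matrix.mul_assoc]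
      _ = Matrix.trace ((Dα * T * (B * Bᴴ)) * Tᴴ) := Matrix.trace_mul_comm _ _
      _ = Matrix.trace (Dα * W * Dβ * Wᴴ) := by
          rw [hBB, hWH, hWdef]
          simp only [Matrix.mul_assoc]
  have htrace3 : Matrix.trace (Dα * W * Dβ * Wᴴ)
      = ((∑ i, ∑ j, α i * β j * S i j : ℝ) : ℂ) := by
    simp only [hSdef]
    have entry : ∀ i, (Dα * W * Dβ * Wᴴ) i i
        = ((∑ j, α i * β j * Complex.normSq (W i j) : ℝ) : ℂ) := by
      intro i
      rw [Matrix.mul_apply]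
      push_cast
      refine Finset.sum_congr rfl fun j _ => ?_
      rw [Matrix.mul_diagonal, Matrix.diagonal_mul, Matrix.conjTranspose_apply,
        Complex.star_def]
      calc (α i : ℂ) * W i j * (β j : ℂ) * (starRingEnd ℂ) (W i j)
          = (α i : ℂ) * (β j : ℂ) * (W i j * (starRingEnd ℂ) (W i j)) := by ring
        _ = (α i : ℂ) * (β j : ℂ) * ((Complex.normSq (W i j) : ℝ) : ℂ) := by
            rw [Complex.mul_conj]
    rw [Matrix.trace]
    push_cast
    exact Finset.sum_congr rfl fun i _ => by rw [Matrix.diag_apply, entry i]; push_cast; rfl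
  have hfrobr : frob (A * B) ^ 2 = ∑ i, ∑ j, α i * β j * S i j := by
    have h1 : frob (A * B) ^ 2 = ∑ i, ∑ j, ‖(A * B) i j‖ ^ 2 := by
      rw [frob, Real.sq_sqrt]
      exact Finset.sum_nonneg fun i _ => Finset.sum_nonneg fun j _ => by positivity
    rw [h1]
    have := (trace_conjT_mul (A * B)).symm.trans (htrace2.trans htrace3)
    exact_mod_cast this
  -- S is doubly stochastic
  have hSds : S ∈ doublyStochastic ℝ (Fin n) := by
    rw [mem_doublyStochastic_iff_sum]
    refine ⟨fun i j => Complex.normSq_nonneg _, fun i => ?_, fun j => ?_⟩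
    · have h := congrFun (congrFun hWW i) i
      simp only [Matrix.mul_apply, Matrix.conjTranspose_apply, Matrix.one_apply_eq,
        Complex.star_def, Complex.mul_conj] at h
      exact_mod_cast h
    · have h := congrFun (congrFun hWW' j) j
      simp only [Matrix.mul_apply, Matrix.conjTranspose_apply, Matrix.one_apply_eq,
        Complex.star_def] at h
      have h2 : ∀ z : ℂ, (starRingEnd ℂ) z * z = (Complex.normSq z : ℂ) := fun z => by
        rw [mul_comm]; exact Complex.mul_conj z
      simp only [h2] at h
      exact_mod_cast h
  obtain ⟨w, hw0, hw1, hwS⟩ := exists_eq_sum_perm_of_mem_doublyStochastic hSds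
  -- rearrangement bound
  have hperm : ∀ σ : Equiv.Perm (Fin n), ∑ i, a i * b i ≤ ∑ i, α i * β (σ i) := by
    intro σ
    have hav : Antivary a b := fun i j hij => haAnti (hbMono.reflect_lt hij).le
    set ρ : Equiv.Perm (Fin n) := (σA.trans σ).trans σB.symm with hρdef
    have he : ∑ i, α i * β (σ i) = ∑ i, a i * b (ρ i) := by
      rw [← Equiv.sum_comp σA (fun i => α i * β (σ i))]
      refine Finset.sum_congr rfl fun i _ => ?_
      rw [hσA i, hσB (ρ i)]
      congr 1
      simp [hρdef]
    rw [he]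
    exact hav.sum_mul_le_sum_mul_comp_perm
  -- split the sum along Birkhoff's decomposition
  have hsplit : ∑ i, ∑ j, α i * β j * S i j
      = ∑ σ : Equiv.Perm (Fin n), w σ * ∑ i, α i * β (σ i) := by
    have hSexp : ∀ i j, S i j = ∑ σ : Equiv.Perm (Fin n), w σ * (σ.permMatrix ℝ) i j := by
      intro i j
      rw [← hwS]
      simp [Matrix.sum_apply]
    calc ∑ i, ∑ j, α i * β j * S i j
        = ∑ i, ∑ j, ∑ σ : Equiv.Perm (Fin n), w σ * (α i * β j * (σ.permMatrix ℝ) i j) := by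
          refine Finset.sum_congr rfl fun i _ => Finset.sum_congr rfl fun j _ => ?_
          rw [hSexp i j, Finset.mul_sum]
          exact Finset.sum_congr rfl fun σ _ => by ring
      _ = ∑ i, ∑ σ : Equiv.Perm (Fin n), ∑ j, w σ * (α i * β j * (σ.permMatrix ℝ) i j) :=
          Finset.sum_congr rfl fun i _ => Finset.sum_comm
      _ = ∑ σ : Equiv.Perm (Fin n), ∑ i, ∑ j, w σ * (α i * β j * (σ.permMatrix ℝ) i j) :=
          Finset.sum_comm
      _ = ∑ σ : Equiv.Perm (Fin n), w σ * ∑ i, α i * β (σ i) := by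
          refine Finset.sum_congr rfl fun σ _ => ?_
          rw [Finset.mul_sum]
          refine Finset.sum_congr rfl fun i _ => ?_
          simp [Equiv.Perm.permMatrix, PEquiv.toMatrix_apply, Equiv.toPEquiv_apply,
            mul_ite, mul_zero, mul_one, Finset.mul_sum]
  rw [hfrobr, hsplit]
  calc ∑ i, a i * b i = ∑ σ : Equiv.Perm (Fin n), w σ * ∑ i, a i * b i := by
        rw [← Finset.sum_mul, hw1, one_mul]
    _ ≤ ∑ σ : Equiv.Perm (Fin n), w σ * ∑ i, α i * β (σ i) :=
        Finset.sum_le_sum fun σ _ => mul_le_mul_of_nonneg_left (hperm σ) (hw0 σ)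
end

section
/- Let L be a k-dimensional lattice in M_n(ℂ) with mindet(L) = 1 and suppose k − mn > 0 for a positive integer m. Then there exists a constant K₁ > 0 such that for all sufficiently large M, Σ_{X ∈ L, 0 < ‖X‖_F ≤ M} 1/|det(X)|^m ≥ K₁·M^{k−mn}. -/
lemma frob_nonneg {n : ℕ} (X : Matrix (Fin n) (Fin n) ℂ) : 0 ≤ frob X :=
  Real.sqrt_nonneg _

lemma entry_le_frob {n : ℕ} (X : Matrix (Fin n) (Fin n) ℂ) (i j : Fin n) :
    ‖X i j‖ ≤ frob X := by
  rw [frob, show ‖X i j‖ = Real.sqrt (‖X i j‖ ^ 2) by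
    rw [Real.sqrt_sq (norm_nonneg _)]]
  apply Real.sqrt_le_sqrt
  calc ‖X i j‖ ^ 2 ≤ ∑ j', ‖X i j'‖ ^ 2 :=
        Finset.single_le_sum (f := fun j' => ‖X i j'‖ ^ 2)
          (fun j' _ => sq_nonneg _) (Finset.mem_univ j)
    _ ≤ ∑ i', ∑ j', ‖X i' j'‖ ^ 2 :=
        Finset.single_le_sum (f := fun i' => ∑ j', ‖X i' j'‖ ^ 2)
          (fun i' _ => Finset.sum_nonneg fun j' _ => sq_nonneg _) (Finset.mem_univ i)

lemma frob_le_sum {n : ℕ} (X : Matrix (Fin n) (Fin n) ℂ) :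
    frob X ≤ ∑ i, ∑ j, ‖X i j‖ := by
  rw [frob]
  have h : ∑ i, ∑ j, ‖X i j‖ ^ 2 ≤ (∑ i, ∑ j, ‖X i j‖) ^ 2 := by
    rw [← Finset.sum_product']
    rw [← Finset.sum_product' (f := fun i j => ‖X i j‖)]
    exact Finset.sum_sq_le_sq_sum_of_nonneg fun p _ => norm_nonneg _
  calc Real.sqrt (∑ i, ∑ j, ‖X i j‖ ^ 2)
      ≤ Real.sqrt ((∑ i, ∑ j, ‖X i j‖) ^ 2) := Real.sqrt_le_sqrt h
    _ = ∑ i, ∑ j, ‖X i j‖ := Real.sqrt_sq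
        (Finset.sum_nonneg fun i _ => Finset.sum_nonneg fun j _ => norm_nonneg _)

lemma abs_det_le {n : ℕ} (X : Matrix (Fin n) (Fin n) ℂ) :
    ‖X.det‖ ≤ (n.factorial : ℝ) * frob X ^ n := by
  rw [Matrix.det_apply]
  calc ‖∑ σ : Equiv.Perm (Fin n), Equiv.Perm.sign σ • ∏ i, X (σ i) i‖
      ≤ ∑ σ : Equiv.Perm (Fin n), ‖Equiv.Perm.sign σ • ∏ i, X (σ i) i‖ :=
        norm_sum_le _ _
    _ ≤ ∑ _σ : Equiv.Perm (Fin n), frob X ^ n := by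
        apply Finset.sum_le_sum
        intro σ _
        have h1 : ‖Equiv.Perm.sign σ • ∏ i, X (σ i) i‖
            = ‖∏ i, X (σ i) i‖ := by
          rcases Int.units_eq_one_or (Equiv.Perm.sign σ) with h | h <;> simp [h]
        rw [h1, norm_prod]
        calc ∏ i, ‖X (σ i) i‖ ≤ ∏ _i : Fin n, frob X :=
              Finset.prod_le_prod (fun i _ => norm_nonneg _)
                (fun i _ => entry_le_frob X (σ i) i)
          _ = frob X ^ n := by simp
    _ = (n.factorial : ℝ) * frob X ^ n := by
        rw [Finset.sum_const, Finset.card_univ, Fintype.card_perm, Fintype.card_fin,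
          nsmul_eq_mul]

/-- If `L` is a `k`-dimensional matrix lattice in `Mₙ(ℂ)` with minimum determinant `1` and
`k − m·n > 0`, then for all sufficiently large `M` the inverse determinant sum over nonzero
lattice points of norm at most `M` is at least `K₁·M^(k−mn)`. -/
theorem inverse_det_sum_lower_bound (n k m : ℕ) (hm : 0 < m) (hkm : m * n < k)
    (B : Fin k → Matrix (Fin n) (Fin n) ℂ) (hB : LinearIndependent ℝ B)
    (L : Set (Matrix (Fin n) (Fin n) ℂ))
    (hL : L = {X | ∃ v : Fin k → ℤ, X = ∑ i, v i • B i})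
    (hmindet : IsGLB {r : ℝ | ∃ X ∈ L, X ≠ 0 ∧ r = ‖X.det‖} 1) :
    ∃ K₁ : ℝ, 0 < K₁ ∧ ∃ M₀ : ℝ, ∀ M : ℝ, M₀ ≤ M →
      ∃ S : Finset (Matrix (Fin n) (Fin n) ℂ),
      (∀ X ∈ S, X ∈ L ∧ X ≠ 0 ∧ frob X ≤ M) ∧
      K₁ * M ^ (k - m * n) ≤ ∑ X ∈ S, 1 / ‖X.det‖ ^ m := by
  classical
  set φ : (Fin k → ℤ) → Matrix (Fin n) (Fin n) ℂ := fun v => ∑ i, v i • B i with hφ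
  -- injectivity
  have hinj : Function.Injective φ := by
    intro v w hvw
    have e : ∀ u : Fin k → ℤ, ∑ i, ((u i : ℝ)) • B i = φ u := by
      intro u
      simp only [hφ]
      congr 1
      funext i
      rw [Int.cast_smul_eq_zsmul]
    have hz : ∑ i, ((v i : ℝ) - (w i : ℝ)) • B i = 0 := by
      simp only [sub_smul, Finset.sum_sub_distrib]
      rw [e v, e w, hvw, sub_self]
    have h := Fintype.linearIndependent_iff.mp hB (fun i => (v i : ℝ) - (w i : ℝ)) hz
    funext i
    have hi : (v i : ℝ) - (w i : ℝ) = 0 := h i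
    have : (v i : ℝ) = (w i : ℝ) := by linarith
    exact_mod_cast this
  have hφ0 : φ 0 = 0 := by simp [hφ]
  -- constants
  set c : Fin k → ℝ := fun i => ∑ p, ∑ q, ‖B i p q‖ with hc
  have hc0 : ∀ i, 0 ≤ c i := fun i =>
    Finset.sum_nonneg fun p _ => Finset.sum_nonneg fun q _ => norm_nonneg _
  set C : ℝ := 1 + ∑ i, c i with hCdef
  have hC1 : 1 ≤ C := le_add_of_nonneg_right (Finset.sum_nonneg fun i _ => hc0 i)
  have hC0 : 0 < C := lt_of_lt_of_le one_pos hC1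
  have hsumc : ∑ i, c i ≤ C := by simp [hCdef]
  -- frob bound
  have hfrob : ∀ v : Fin k → ℤ, frob (φ v) ≤ ∑ i, (|v i| : ℝ) * c i := by
    intro v
    refine (frob_le_sum _).trans ?_
    have step : ∀ p q : Fin n, ‖φ v p q‖
        ≤ ∑ i, (|v i| : ℝ) * ‖B i p q‖ := by
      intro p q
      have hentry : φ v p q = ∑ i, (v i : ℂ) * (B i p q) := by
        show (∑ i, v i • B i) p q = _
        rw [Matrix.sum_apply]
        exact Finset.sum_congr rfl fun i _ => by
          rw [Matrix.smul_apply, zsmul_eq_mul]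
      rw [hentry]
      refine (norm_sum_le _ _).trans ?_
      apply Finset.sum_le_sum
      intro i _
      rw [norm_mul]
      apply mul_le_mul_of_nonneg_right _ (norm_nonneg _)
      rw [Complex.norm_intCast]
    calc ∑ p, ∑ q, ‖φ v p q‖
        ≤ ∑ p, ∑ q, ∑ i, (|v i| : ℝ) * ‖B i p q‖ :=
          Finset.sum_le_sum fun p _ => Finset.sum_le_sum fun q _ => step p q
      _ = ∑ i, (|v i| : ℝ) * c i := by
          calc ∑ p, ∑ q, ∑ i, (|v i| : ℝ) * ‖B i p q‖
              = ∑ p, ∑ i, ∑ q, (|v i| : ℝ) * ‖B i p q‖ :=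
                Finset.sum_congr rfl fun p _ => Finset.sum_comm
            _ = ∑ i, ∑ p, ∑ q, (|v i| : ℝ) * ‖B i p q‖ := Finset.sum_comm
            _ = ∑ i, (|v i| : ℝ) * c i := by simp [hc, Finset.mul_sum]
  -- main constants
  have hfact : (0:ℝ) < n.factorial := by exact_mod_cast n.factorial_pos
  set P : ℝ := ((n.factorial : ℝ)) ^ m * C ^ (m * n) with hP
  have hP0 : 0 < P := by positivity
  refine ⟨(2*C)⁻¹ ^ (k - m*n) / P, by positivity, 2*C, ?_⟩
  intro M hM
  have hM0 : 0 < M := lt_of_lt_of_le (by linarith) hM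
  set R : ℕ := ⌊M / C⌋₊ with hR
  have hRC : C * R ≤ M := by
    have h := Nat.floor_le (show 0 ≤ M / C by positivity)
    calc C * (R:ℝ) ≤ C * (M/C) := mul_le_mul_of_nonneg_left h (le_of_lt hC0)
      _ = M := by field_simp
  have hMR : M / (2*C) ≤ (R:ℝ) := by
    have h1 : M / C - 1 < (R:ℝ) := Nat.sub_one_lt_floor _
    have ht2 : (2:ℝ) ≤ M / C := (le_div_iff₀ hC0).mpr (by linarith)
    have h2 : M / (2*C) ≤ M / C - 1 := by
      have : M / (2*C) = (M/C)/2 := by rw [div_div, mul_comm]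
      rw [this]
      linarith
    linarith
  have hR2 : 1 ≤ (R:ℝ) := by
    have : (1:ℝ) ≤ M/(2*C) := (le_div_iff₀ (by positivity)).mpr (by linarith)
    linarith
  have hR1 : 1 ≤ R := by exact_mod_cast hR2
  set T : Finset (Fin k → ℤ) :=
    (Fintype.piFinset fun _ : Fin k => Finset.Icc (-(R:ℤ)) (R:ℤ)).erase 0 with hT
  set S : Finset (Matrix (Fin n) (Fin n) ℂ) := T.image φ with hS
  have hmem : ∀ X ∈ S, X ∈ L ∧ X ≠ 0 ∧ frob X ≤ C * R := by
    intro X hX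
    rw [hS, Finset.mem_image] at hX
    obtain ⟨v, hvT, rfl⟩ := hX
    rw [hT, Finset.mem_erase] at hvT
    obtain ⟨hv0, hvI⟩ := hvT
    rw [Fintype.mem_piFinset] at hvI
    have hvb : ∀ i, (|v i| : ℝ) ≤ (R:ℝ) := by
      intro i
      have h := hvI i
      rw [Finset.mem_Icc] at h
      have h2 : |v i| ≤ (R:ℤ) := abs_le.mpr h
      exact_mod_cast h2
    refine ⟨?_, ?_, ?_⟩
    · rw [hL]; exact ⟨v, rfl⟩
    · intro h0
      exact hv0 (hinj (h0.trans hφ0.symm))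
    · calc frob (φ v) ≤ ∑ i, (|v i| : ℝ) * c i := hfrob v
        _ ≤ ∑ i, (R:ℝ) * c i :=
            Finset.sum_le_sum fun i _ => mul_le_mul_of_nonneg_right (hvb i) (hc0 i)
        _ = (R:ℝ) * ∑ i, c i := by rw [← Finset.mul_sum]
        _ ≤ (R:ℝ) * C := mul_le_mul_of_nonneg_left hsumc (by positivity)
        _ = C * R := mul_comm _ _
  have hdet1 : ∀ X ∈ S, 1 ≤ ‖X.det‖ := by
    intro X hX
    obtain ⟨h1, h2, _⟩ := hmem X hX
    exact hmindet.1 ⟨X, h1, h2, rfl⟩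
  refine ⟨S, fun X hX => ⟨(hmem X hX).1, (hmem X hX).2.1, (hmem X hX).2.2.trans hRC⟩, ?_⟩
  set D : ℝ := ((n.factorial : ℝ) * (C * R) ^ n) ^ m with hD
  have hCR0 : 0 < C * (R:ℝ) := by nlinarith
  have hD0 : 0 < D := by positivity
  have hterm : ∀ X ∈ S, 1 / D ≤ 1 / ‖X.det‖ ^ m := by
    intro X hX
    have h1 := hdet1 X hX
    have hdp : 0 < ‖X.det‖ ^ m := pow_pos (lt_of_lt_of_le one_pos h1) m
    apply one_div_le_one_div_of_le hdp
    have hfr := (hmem X hX).2.2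
    calc ‖X.det‖ ^ m ≤ ((n.factorial:ℝ) * frob X ^ n) ^ m :=
          pow_le_pow_left₀ (norm_nonneg _) (abs_det_le X) m
      _ ≤ D := by
          rw [hD]
          apply pow_le_pow_left₀ (mul_nonneg hfact.le (pow_nonneg (frob_nonneg X) n)) _ m
          apply mul_le_mul_of_nonneg_left _ (le_of_lt hfact)
          exact pow_le_pow_left₀ (frob_nonneg X) hfr n
  have hk0 : k ≠ 0 := by omega
  have hcardT : R ^ k ≤ T.card := by
    have h0mem : (0 : Fin k → ℤ) ∈ Fintype.piFinset fun _ : Fin k => Finset.Icc (-(R:ℤ)) (R:ℤ) := by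
      rw [Fintype.mem_piFinset]
      intro i
      rw [Finset.mem_Icc]
      constructor <;> simp
    rw [hT, Finset.card_erase_of_mem h0mem, Fintype.card_piFinset]
    have hIcc : ∀ i : Fin k, (Finset.Icc (-(R:ℤ)) (R:ℤ)).card = 2*R+1 := by
      intro i
      rw [Int.card_Icc]
      omega
    rw [Finset.prod_congr rfl (fun i _ => hIcc i), Finset.prod_const, Finset.card_univ,
      Fintype.card_fin]
    have hlt : R ^ k < (R+1) ^ k := Nat.pow_lt_pow_left (Nat.lt_succ_self R) hk0
    have hle : (R+1) ^ k ≤ (2*R+1) ^ k := Nat.pow_le_pow_left (by omega) k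
    omega
  have hcardS : R ^ k ≤ S.card := by
    rw [hS, Finset.card_image_of_injective T hinj]
    exact hcardT
  have hsum : (S.card : ℝ) * (1/D) ≤ ∑ X ∈ S, 1 / ‖X.det‖ ^ m := by
    have h := Finset.card_nsmul_le_sum S (fun X => 1 / ‖X.det‖ ^ m) (1/D) hterm
    rwa [nsmul_eq_mul] at h
  have hRn0 : ((R:ℝ)) ^ (m*n) ≠ 0 := by positivity
  calc (2*C)⁻¹ ^ (k - m*n) / P * M ^ (k - m*n)
      = (M / (2*C)) ^ (k - m*n) / P := by
        rw [div_mul_eq_mul_div, ← mul_pow, inv_mul_eq_div]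
    _ ≤ (R:ℝ) ^ (k - m*n) / P := by gcongr <;> positivity
    _ = (R:ℝ) ^ k / D := by
        have hDP : D = P * (R:ℝ)^(m*n) := by
          rw [hD, hP, mul_pow, ← pow_mul, Nat.mul_comm n m, mul_pow, ← mul_assoc]
        have hRk : (R:ℝ)^k = (R:ℝ)^(k - m*n) * (R:ℝ)^(m*n) := by
          rw [← pow_add]
          congr 1
          omega
        rw [hDP, hRk, mul_div_mul_right _ _ hRn0]
    _ ≤ (S.card:ℝ) / D := by
        gcongr
        exact_mod_cast hcardS
    _ = (S.card:ℝ) * (1/D) := by rw [mul_one_div]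
    _ ≤ _ := hsum
end

section
/- Let L be the Alamouti lattice in M₂(ℂ) and m ≥ 1 a real number. Then there exist constants K₁, K₂ > 0 such that for all sufficiently large M, K₂ ≤ Σ_{X ∈ L, 0 < ‖X‖_F ≤ M} 1/|det(X)|^{2m} ≤ K₁·log(M). -/
open Complex

noncomputable def ent1 (X : Matrix (Fin 2) (Fin 2) ℂ) : ℤ := ⌊(X 0 0).re⌋
noncomputable def ent2 (X : Matrix (Fin 2) (Fin 2) ℂ) : ℤ := ⌊(X 0 0).im⌋
noncomputable def ent3 (X : Matrix (Fin 2) (Fin 2) ℂ) : ℤ := ⌊(X 1 0).re⌋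
noncomputable def ent4 (X : Matrix (Fin 2) (Fin 2) ℂ) : ℤ := ⌊(X 1 0).im⌋
noncomputable def qd (X : Matrix (Fin 2) (Fin 2) ℂ) : ℤ :=
  ent1 X ^ 2 + ent2 X ^ 2 + ent3 X ^ 2 + ent4 X ^ 2

def alam (x₁ x₂ x₃ x₄ : ℤ) : Matrix (Fin 2) (Fin 2) ℂ :=
  !![(x₁ : ℂ) + (x₂ : ℂ) * Complex.I,
      -(star ((x₃ : ℂ) + (x₄ : ℂ) * Complex.I));
     (x₃ : ℂ) + (x₄ : ℂ) * Complex.I,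
      star ((x₁ : ℂ) + (x₂ : ℂ) * Complex.I)]

lemma ent1_alam (x₁ x₂ x₃ x₄ : ℤ) : ent1 (alam x₁ x₂ x₃ x₄) = x₁ := by
  simp [ent1, alam]
lemma ent2_alam (x₁ x₂ x₃ x₄ : ℤ) : ent2 (alam x₁ x₂ x₃ x₄) = x₂ := by
  simp [ent2, alam]
lemma ent3_alam (x₁ x₂ x₃ x₄ : ℤ) : ent3 (alam x₁ x₂ x₃ x₄) = x₃ := by
  simp [ent3, alam]
lemma ent4_alam (x₁ x₂ x₃ x₄ : ℤ) : ent4 (alam x₁ x₂ x₃ x₄) = x₄ := by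
  simp [ent4, alam]

lemma det_alam (x₁ x₂ x₃ x₄ : ℤ) :
    (alam x₁ x₂ x₃ x₄).det = ((x₁^2 + x₂^2 + x₃^2 + x₄^2 : ℤ) : ℂ) := by
  simp only [alam, Matrix.det_fin_two_of, Complex.star_def, neg_mul, sub_neg_eq_add,
    mul_comm ((starRingEnd ℂ) _)]
  rw [Complex.mul_conj, Complex.mul_conj]
  have h1 : Complex.normSq ((x₁:ℂ) + (x₂:ℂ)*I) = (x₁:ℝ)^2 + (x₂:ℝ)^2 := by
    simp [Complex.normSq_apply]; ring
  have h2 : Complex.normSq ((x₃:ℂ) + (x₄:ℂ)*I) = (x₃:ℝ)^2 + (x₄:ℝ)^2 := by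
    simp [Complex.normSq_apply]; ring
  rw [h1, h2]
  push_cast
  ring

lemma frob_alam (x₁ x₂ x₃ x₄ : ℤ) :
    frob (alam x₁ x₂ x₃ x₄) = Real.sqrt (2 * ((x₁^2 + x₂^2 + x₃^2 + x₄^2 : ℤ) : ℝ)) := by
  unfold frob
  congr 1
  rw [Fin.sum_univ_two]
  simp only [Fin.sum_univ_two, Complex.sq_norm, alam]
  simp [Complex.normSq_apply]
  ring

lemma qd_alam (x₁ x₂ x₃ x₄ : ℤ) :
    qd (alam x₁ x₂ x₃ x₄) = x₁^2 + x₂^2 + x₃^2 + x₄^2 := by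
  simp [qd, ent1_alam, ent2_alam, ent3_alam, ent4_alam]

lemma mem_repr {X : Matrix (Fin 2) (Fin 2) ℂ}
    (h : ∃ x₁ x₂ x₃ x₄ : ℤ, X = alam x₁ x₂ x₃ x₄) :
    X = alam (ent1 X) (ent2 X) (ent3 X) (ent4 X) := by
  obtain ⟨x₁, x₂, x₃, x₄, rfl⟩ := h
  rw [ent1_alam, ent2_alam, ent3_alam, ent4_alam]

lemma qd_pos {X : Matrix (Fin 2) (Fin 2) ℂ}
    (h : ∃ x₁ x₂ x₃ x₄ : ℤ, X = alam x₁ x₂ x₃ x₄) (hX : X ≠ 0) :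
    1 ≤ qd X := by
  obtain ⟨x₁, x₂, x₃, x₄, rfl⟩ := h
  rw [qd_alam]
  rcases eq_or_ne (x₁^2 + x₂^2 + x₃^2 + x₄^2) 0 with h0 | h0
  · exfalso
    have h1 : x₁ = 0 := by
      have : x₁^2 ≤ 0 := by nlinarith [sq_nonneg x₂, sq_nonneg x₃, sq_nonneg x₄]
      have := le_antisymm this (sq_nonneg x₁)
      exact (pow_eq_zero_iff two_ne_zero).mp this
    have h2 : x₂ = 0 := by
      have : x₂^2 ≤ 0 := by nlinarith [sq_nonneg x₁, sq_nonneg x₃, sq_nonneg x₄]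
      have := le_antisymm this (sq_nonneg x₂)
      exact (pow_eq_zero_iff two_ne_zero).mp this
    have h3 : x₃ = 0 := by
      have : x₃^2 ≤ 0 := by nlinarith [sq_nonneg x₁, sq_nonneg x₂, sq_nonneg x₄]
      have := le_antisymm this (sq_nonneg x₃)
      exact (pow_eq_zero_iff two_ne_zero).mp this
    have h4 : x₄ = 0 := by
      have : x₄^2 ≤ 0 := by nlinarith [sq_nonneg x₁, sq_nonneg x₂, sq_nonneg x₃]
      have := le_antisymm this (sq_nonneg x₄)
      exact (pow_eq_zero_iff two_ne_zero).mp this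
    subst h1; subst h2; subst h3; subst h4
    apply hX
    ext i j
    fin_cases i <;> fin_cases j <;> simp [alam]
  · have hge : 0 ≤ x₁^2 + x₂^2 + x₃^2 + x₄^2 := by positivity
    omega

lemma card_box (S : Finset (Matrix (Fin 2) (Fin 2) ℂ))
    (hS : ∀ X ∈ S, ∃ x₁ x₂ x₃ x₄ : ℤ, X = alam x₁ x₂ x₃ x₄) (c : ℤ)
    (hc : 0 ≤ c)
    (hb : ∀ X ∈ S, |ent1 X| ≤ c ∧ |ent2 X| ≤ c ∧ |ent3 X| ≤ c ∧ |ent4 X| ≤ c) :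
    (S.card : ℝ) ≤ ((2*c+1 : ℤ) : ℝ) ^ 4 := by
  classical
  set t := (Finset.Icc (-c) c) ×ˢ (Finset.Icc (-c) c) ×ˢ (Finset.Icc (-c) c) ×ˢ (Finset.Icc (-c) c)
    with ht
  have hmaps : ∀ X ∈ S, (ent1 X, ent2 X, ent3 X, ent4 X) ∈ t := by
    intro X hX
    obtain ⟨h1, h2, h3, h4⟩ := hb X hX
    rw [abs_le] at h1 h2 h3 h4
    simp [ht, Finset.mem_product, Finset.mem_Icc, h1.1, h1.2, h2.1, h2.2, h3.1, h3.2, h4.1, h4.2]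
  have hinj : Set.InjOn (fun X => (ent1 X, ent2 X, ent3 X, ent4 X)) S := by
    intro X hXm Y hYm hxy
    simp only [Prod.mk.injEq] at hxy
    rw [mem_repr (hS X hXm), mem_repr (hS Y hYm), hxy.1, hxy.2.1, hxy.2.2.1, hxy.2.2.2]
  have hcard := Finset.card_le_card_of_injOn _ hmaps hinj
  have htc : t.card = ((2*c+1).toNat) ^ 4 := by
    simp [ht, Finset.card_product, Int.card_Icc]
    ring_nf
  have : (S.card : ℝ) ≤ (t.card : ℝ) := by exact_mod_cast hcard
  rw [htc] at this
  refine this.trans (le_of_eq ?_)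
  have h24 : (((2*c+1).toNat : ℕ) : ℝ) = ((2*c+1 : ℤ) : ℝ) := by
    rw [← Int.cast_natCast, Int.toNat_of_nonneg (by omega)]
  rw [Nat.cast_pow, h24]

-- helper: basic facts about a lattice element in a finset satisfying the constraints
lemma det_abs_eq {X : Matrix (Fin 2) (Fin 2) ℂ}
    (h : ∃ x₁ x₂ x₃ x₄ : ℤ, X = alam x₁ x₂ x₃ x₄) :
    ‖X.det‖ = |((qd X : ℤ) : ℝ)| := by
  conv_lhs => rw [mem_repr h]
  rw [det_alam, ← qd_alam (ent1 X) (ent2 X) (ent3 X) (ent4 X), ← mem_repr h]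
  exact_mod_cast Complex.norm_intCast _

lemma frob_eq {X : Matrix (Fin 2) (Fin 2) ℂ}
    (h : ∃ x₁ x₂ x₃ x₄ : ℤ, X = alam x₁ x₂ x₃ x₄) :
    frob X = Real.sqrt (2 * ((qd X : ℤ) : ℝ)) := by
  conv_lhs => rw [mem_repr h]
  rw [frob_alam, ← qd_alam (ent1 X) (ent2 X) (ent3 X) (ent4 X)]
  rw [← mem_repr h]

/-- For the Alamouti lattice `L ⊆ M₂(ℂ)` and any real `m ≥ 1`, there are constants
`K₁, K₂ > 0` such that for all sufficiently large `M`,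
`K₂ ≤ ∑_{X ∈ L, 0 < ‖X‖_F ≤ M} 1/|det X|^(2m) ≤ K₁·log M`. -/
theorem alamouti_inverse_det_sum_bounds (m : ℝ) (hm : 1 ≤ m)
    (L : Set (Matrix (Fin 2) (Fin 2) ℂ))
    (hL : L = {X | ∃ x₁ x₂ x₃ x₄ : ℤ,
      X = !![(x₁ : ℂ) + (x₂ : ℂ) * Complex.I,
              -(star ((x₃ : ℂ) + (x₄ : ℂ) * Complex.I));
             (x₃ : ℂ) + (x₄ : ℂ) * Complex.I,
              star ((x₁ : ℂ) + (x₂ : ℂ) * Complex.I)]}) :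
    ∃ K₁ : ℝ, 0 < K₁ ∧ ∃ K₂ : ℝ, 0 < K₂ ∧ ∃ M₀ : ℝ, ∀ M : ℝ, M₀ ≤ M →
      (∃ S : Finset (Matrix (Fin 2) (Fin 2) ℂ),
        (∀ X ∈ S, X ∈ L ∧ X ≠ 0 ∧ frob X ≤ M) ∧
        K₂ ≤ ∑ X ∈ S, 1 / ‖X.det‖ ^ (2 * m)) ∧
      (∀ S : Finset (Matrix (Fin 2) (Fin 2) ℂ),
        (∀ X ∈ S, X ∈ L ∧ X ≠ 0 ∧ frob X ≤ M) →
        ∑ X ∈ S, 1 / ‖X.det‖ ^ (2 * m) ≤ K₁ * Real.log M) := by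
  classical
  have hLmem : ∀ X : Matrix (Fin 2) (Fin 2) ℂ, X ∈ L ↔ ∃ x₁ x₂ x₃ x₄ : ℤ,
      X = alam x₁ x₂ x₃ x₄ := by
    intro X; rw [hL]; rfl
  refine ⟨20480, by norm_num, 1, by norm_num, 3, fun M hM => ?_⟩
  have hM0 : (0:ℝ) < M := by linarith
  have hlogM : 1 ≤ Real.log M := by
    rw [Real.le_log_iff_exp_le hM0]
    have := Real.exp_one_lt_d9
    linarith
  constructor
  · -- lower bound: the single matrix alam 1 0 0 0
    refine ⟨{alam 1 0 0 0}, ?_, ?_⟩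
    · intro X hX
      rw [Finset.mem_singleton] at hX
      subst hX
      refine ⟨(hLmem _).mpr ⟨1, 0, 0, 0, rfl⟩, ?_, ?_⟩
      · intro h0
        have := det_alam 1 0 0 0
        rw [h0] at this
        simp at this
      · rw [frob_alam]
        have h9 : Real.sqrt (2 * (((1:ℤ)^2 + 0^2 + 0^2 + 0^2 : ℤ) : ℝ)) ≤ Real.sqrt 9 := by
          apply Real.sqrt_le_sqrt; norm_num
        have : Real.sqrt 9 = 3 := by
          rw [show (9:ℝ) = 3^2 by norm_num, Real.sqrt_sq (by norm_num)]
        rw [this] at h9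
        exact h9.trans hM
    · rw [Finset.sum_singleton, det_alam]
      have h1 : ‖(((1:ℤ)^2 + 0^2 + 0^2 + 0^2 : ℤ) : ℂ)‖ = 1 := by norm_num
      rw [h1, Real.one_rpow]
      norm_num
  · -- upper bound
    intro S hS
    have hmem : ∀ X ∈ S, ∃ x₁ x₂ x₃ x₄ : ℤ, X = alam x₁ x₂ x₃ x₄ :=
      fun X hX => (hLmem X).mp (hS X hX).1
    have hq1 : ∀ X ∈ S, 1 ≤ qd X := fun X hX => qd_pos (hmem X hX) (hS X hX).2.1
    have habs : ∀ X ∈ S, ‖X.det‖ = ((qd X : ℤ) : ℝ) := by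
      intro X hX
      rw [det_abs_eq (hmem X hX), _root_.abs_of_nonneg]
      have := hq1 X hX
      exact_mod_cast (by omega : (0:ℤ) ≤ qd X)
    have hqM : ∀ X ∈ S, ((qd X : ℤ) : ℝ) ≤ M^2 := by
      intro X hX
      have hf : frob X ≤ M := (hS X hX).2.2
      rw [frob_eq (hmem X hX)] at hf
      have hnn : (0:ℝ) ≤ 2 * ((qd X : ℤ) : ℝ) := by
        have := hq1 X hX
        have : (1:ℝ) ≤ ((qd X : ℤ) : ℝ) := by exact_mod_cast this
        linarith
      have := Real.sq_sqrt hnn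
      nlinarith [Real.sqrt_nonneg (2 * ((qd X : ℤ) : ℝ)), hq1 X hX]
    set T : ℕ := ⌊M^2⌋₊ with hT
    set K : ℕ := Nat.log 2 T with hK
    have hqT : ∀ X ∈ S, (qd X).toNat ≤ T := by
      intro X hX
      apply Nat.le_floor
      have h1 := hqM X hX
      have h0 : (0:ℤ) ≤ qd X := by have := hq1 X hX; omega
      calc (((qd X).toNat : ℕ) : ℝ) = ((qd X : ℤ) : ℝ) := by
            rw [← Int.cast_natCast, Int.toNat_of_nonneg h0]
        _ ≤ M^2 := h1
    have hmaps : ∀ X ∈ S, Nat.log 2 (qd X).toNat ∈ Finset.range (K + 1) := by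
      intro X hX
      rw [Finset.mem_range, Nat.lt_succ_iff, hK]
      exact Nat.log_mono_right (hqT X hX)
    rw [← Finset.sum_fiberwise_of_maps_to hmaps (fun X => 1 / ‖X.det‖ ^ (2 * m))]
    -- each fiber is bounded by 4096
    have hfiber : ∀ k ∈ Finset.range (K + 1),
        ∑ X ∈ S.filter (fun X => Nat.log 2 (qd X).toNat = k),
          1 / ‖X.det‖ ^ (2 * m) ≤ 4096 := by
      intro k _
      set F := S.filter (fun X => Nat.log 2 (qd X).toNat = k) with hF
      have hFS : ∀ X ∈ F, X ∈ S := fun X hX => (Finset.mem_filter.mp hX).1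
      have hlow : ∀ X ∈ F, (2:ℕ)^k ≤ (qd X).toNat := by
        intro X hX
        have h1 := hq1 X (hFS X hX)
        have hne : (qd X).toNat ≠ 0 := by omega
        have := Nat.pow_log_le_self 2 hne
        rwa [(Finset.mem_filter.mp hX).2] at this
      have hhigh : ∀ X ∈ F, (qd X).toNat < 2^(k+1) := by
        intro X hX
        have := Nat.lt_pow_succ_log_self (by norm_num : 1 < 2) (qd X).toNat
        rwa [(Finset.mem_filter.mp hX).2] at this
      -- term bound : each term ≤ 1/4^k
      have hterm : ∀ X ∈ F, 1 / ‖X.det‖ ^ (2 * m) ≤ 1 / (4:ℝ)^k := by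
        intro X hX
        have hXS := hFS X hX
        rw [habs X hXS]
        have h2k : ((2:ℝ)^k) ≤ ((qd X : ℤ) : ℝ) := by
          have := hlow X hX
          have h0 : (0:ℤ) ≤ qd X := by have := hq1 X hXS; omega
          calc ((2:ℝ)^k) = (((2:ℕ)^k : ℕ) : ℝ) := by push_cast; ring
            _ ≤ (((qd X).toNat : ℕ) : ℝ) := by exact_mod_cast this
            _ = ((qd X : ℤ) : ℝ) := by rw [← Int.cast_natCast, Int.toNat_of_nonneg h0]
        have hb1 : (1:ℝ) ≤ (2:ℝ)^k := one_le_pow₀ (by norm_num)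
        have key : (4:ℝ)^k ≤ ((qd X : ℤ) : ℝ) ^ (2 * m) := by
          have e1 : ((2:ℝ)^k) ^ (2*m) ≤ ((qd X : ℤ) : ℝ) ^ (2*m) :=
            Real.rpow_le_rpow (by positivity) h2k (by linarith)
          have e2 : ((2:ℝ)^k) ^ ((2:ℕ):ℝ) ≤ ((2:ℝ)^k) ^ (2*m) :=
            Real.rpow_le_rpow_of_exponent_le hb1 (by push_cast; linarith)
          have e3 : ((2:ℝ)^k) ^ ((2:ℕ):ℝ) = (4:ℝ)^k := by
            rw [Real.rpow_natCast, ← pow_mul, mul_comm k 2, pow_mul]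
            norm_num
          linarith
        apply one_div_le_one_div_of_le (by positivity) key
      -- card bound
      have hcard : (F.card : ℝ) ≤ 4096 * (4:ℝ)^k := by
        set c : ℤ := 2^(k/2+1) with hc
        have hcpos : (0:ℤ) ≤ c := by positivity
        have hbox := card_box F (fun X hX => hmem X (hFS X hX)) c hcpos ?_
        · refine hbox.trans ?_
          have h2j : (0:ℤ) < 2^(k/2) := by positivity
          have hcle : ((2*c+1 : ℤ) : ℝ) ≤ (2:ℝ)^(k/2+3) := by
            have : (2*c+1 : ℤ) ≤ 2^(k/2+3) := by
              rw [hc, pow_add, pow_add]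
              norm_num
              nlinarith [h2j]
            calc ((2*c+1 : ℤ) : ℝ) ≤ ((2^(k/2+3) : ℤ) : ℝ) := by exact_mod_cast this
              _ = (2:ℝ)^(k/2+3) := by push_cast; ring
          have hcnn : (0:ℝ) ≤ ((2*c+1 : ℤ) : ℝ) := by
            have : (0:ℤ) ≤ 2*c+1 := by omega
            exact_mod_cast this
          calc ((2*c+1 : ℤ) : ℝ)^4 ≤ ((2:ℝ)^(k/2+3))^4 := by
                apply pow_le_pow_left₀ hcnn hcle
            _ = (2:ℝ)^(4*(k/2)+12) := by rw [← pow_mul]; ring_nf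
            _ ≤ (2:ℝ)^(2*k+12) := by
                apply pow_le_pow_right₀ (by norm_num)
                omega
            _ = 4096 * (4:ℝ)^k := by
                rw [pow_add, pow_mul]
                norm_num [mul_comm]
        · intro X hX
          have hXS := hFS X hX
          have h0 : (0:ℤ) ≤ qd X := by have := hq1 X hXS; omega
          have hhi : qd X < 2^(k+1) := by
            have := hhigh X hX
            have : ((qd X).toNat : ℤ) < ((2^(k+1) : ℕ) : ℤ) := by exact_mod_cast this
            rwa [Int.toNat_of_nonneg h0, show (((2:ℕ)^(k+1) : ℕ) : ℤ) = 2^(k+1) by push_cast; ring] at this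
          have hsq : 2^(k+1) ≤ c^2 := by
            rw [hc, ← pow_mul]
            apply pow_le_pow_right₀ (by norm_num)
            omega
          have hq : qd X < c^2 := lt_of_lt_of_le hhi hsq
          have e1 := ent1 X; have := qd X
          refine ⟨?_, ?_, ?_, ?_⟩ <;>
          · rw [abs_le]
            unfold qd at hq
            constructor <;> nlinarith [sq_nonneg (ent1 X), sq_nonneg (ent2 X),
              sq_nonneg (ent3 X), sq_nonneg (ent4 X), hcpos]
      calc ∑ X ∈ F, 1 / ‖X.det‖ ^ (2 * m)
          ≤ ∑ X ∈ F, 1 / (4:ℝ)^k := Finset.sum_le_sum hterm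
        _ = (F.card : ℝ) * (1 / (4:ℝ)^k) := by rw [Finset.sum_const, nsmul_eq_mul]
        _ ≤ (4096 * (4:ℝ)^k) * (1 / (4:ℝ)^k) := by
            apply mul_le_mul_of_nonneg_right hcard (by positivity)
        _ = 4096 := by field_simp
    calc ∑ k ∈ Finset.range (K+1), ∑ X ∈ S.filter (fun X => Nat.log 2 (qd X).toNat = k),
            1 / ‖X.det‖ ^ (2 * m)
        ≤ ∑ k ∈ Finset.range (K+1), (4096:ℝ) := Finset.sum_le_sum hfiber
      _ = (K+1 : ℕ) * 4096 := by rw [Finset.sum_const, Finset.card_range, nsmul_eq_mul]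
      _ ≤ 20480 * Real.log M := by
          have hT1 : 1 ≤ T := by
            rw [hT]
            apply Nat.le_floor
            push_cast
            nlinarith
          have h2K : ((2:ℝ))^K ≤ M^2 := by
            have h1 : (2:ℕ)^K ≤ T := by
              rw [hK]
              exact Nat.pow_log_le_self 2 (by omega)
            have h2 : (T:ℝ) ≤ M^2 := Nat.floor_le (by positivity)
            calc ((2:ℝ))^K = (((2:ℕ)^K : ℕ) : ℝ) := by push_cast; ring
              _ ≤ (T:ℝ) := by exact_mod_cast h1
              _ ≤ M^2 := h2
          have hKlog : (K:ℝ) * Real.log 2 ≤ 2 * Real.log M := by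
            have := Real.log_le_log (by positivity) h2K
            rwa [Real.log_pow, Real.log_pow] at this
          have hlog2 : (0.6931471803:ℝ) < Real.log 2 := Real.log_two_gt_d9
          have hKle : (K:ℝ) ≤ 4 * Real.log M := by
            nlinarith [Nat.cast_nonneg (α := ℝ) K]
          push_cast
          nlinarith
end

section
/- Let K be a number field of degree n over an imaginary quadratic field F = ℚ(i) (so K has signature (0, n) over ℚ in terms of complex places), with ring of integers O_K and unit group O_K*. Let σ₁,…,σ_n be the n embeddings of K into ℂ fixing F, and ψ(x) = diag(σ₁(x),…,σ_n(x)). Then there exists a constant N, independent of M, such that for all M ≥ 2, the number of units u ∈ O_K* with ‖ψ(u)‖_F ≤ M is at most N·(log M)^{n−1}. -/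
open IntermediateField NumberField NumberField.Units NumberField.InfinitePlace NumberField.Units.dirichletUnitTheorem

/-- The field `ℚ(i)`, realized as an intermediate field of `ℂ/ℚ`. -/
noncomputable def Qi : IntermediateField ℚ ℂ := IntermediateField.adjoin ℚ {Complex.I}

lemma hImem : Complex.I ∈ Qi := IntermediateField.subset_adjoin ℚ {Complex.I} rfl

lemma Qi_hom_cases (ρ : Qi →+* ℂ) :
    (∀ x : Qi, ρ x = (x : ℂ)) ∨ (∀ x : Qi, ρ x = starRingEnd ℂ (x : ℂ)) := by
  let pb : PowerBasis ℚ Qi := IntermediateField.adjoin.powerBasis Complex.isIntegral_rat_I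
  have hgen : (pb.gen : ℂ) = Complex.I := by
    simp [pb, IntermediateField.adjoin.powerBasis_gen]
  have hsq : (ρ pb.gen - Complex.I) * (ρ pb.gen + Complex.I) = 0 := by
    have hg2 : pb.gen ^ 2 = (-1 : Qi) := by
      ext; push_cast [hgen]; simp [Complex.I_sq]
    have h2 : (ρ pb.gen) ^ 2 = -1 := by rw [← map_pow, hg2, map_neg, map_one]
    linear_combination h2 - Complex.I_sq
  have key : ∀ (g : Qi →ₐ[ℚ] ℂ), g pb.gen = ρ pb.gen → ∀ x : Qi, ρ x = g x := by
    intro g hg x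
    have h : ρ.toRatAlgHom = g :=
      PowerBasis.algHom_ext pb (show ρ.toRatAlgHom pb.gen = g pb.gen from hg.symm)
    rw [← h]; rfl
  rcases mul_eq_zero.mp hsq with h | h
  · left
    intro x
    have := key (Qi.val.toRatAlgHom) (by simpa [sub_eq_zero.mp h] using hgen) x
    simpa using this
  · right
    intro x
    have := key ((starRingEnd ℂ).toRatAlgHom.comp Qi.val.toRatAlgHom)
      (by simp [eq_neg_of_add_eq_zero_left h, hgen, RingHom.toRatAlgHom, Complex.conj_I]) x
    simpa using this

lemma lattice_count {ι E : Type*} [Fintype ι] [NormedAddCommGroup E] [NormedSpace ℝ E]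
    (b : Module.Basis ι ℝ E) :
    ∃ C : ℝ, 0 < C ∧ ∀ R : ℝ, 1 ≤ R →
      (((Submodule.span ℤ (Set.range ⇑b) : Submodule ℤ E) : Set E) ∩
        Metric.closedBall (0:E) R).Finite ∧
      ((((Submodule.span ℤ (Set.range ⇑b) : Submodule ℤ E) : Set E) ∩
        Metric.closedBall (0:E) R).ncard : ℝ) ≤ C * R ^ (Fintype.card ι) := by
  classical
  have : FiniteDimensional ℝ E := b.finiteDimensional_of_finite
  set φ := LinearMap.toContinuousLinearMap (b.equivFun.toLinearMap) with hφ
  set C₀ := ‖φ‖ with hC₀def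
  have hC₀ : 0 ≤ C₀ := norm_nonneg _
  refine ⟨(2*C₀+3)^(Fintype.card ι), by positivity, fun R hR => ?_⟩
  have hR0 : (0:ℝ) ≤ R := by linarith
  set m : ℤ := ⌊C₀ * R⌋ with hm
  have hm0 : 0 ≤ m := Int.le_floor.mpr (by push_cast; positivity)
  set S : Set E := ((Submodule.span ℤ (Set.range ⇑b) : Submodule ℤ E) : Set E) ∩
    Metric.closedBall (0:E) R with hS
  set f : E → (ι → ℤ) := fun x i => ⌊b.repr x i⌋ with hf
  have hint : ∀ x ∈ S, ∀ i, b.repr x i = ((f x i : ℤ) : ℝ) := by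
    intro x hx i
    obtain ⟨k, hk⟩ := (b.mem_span_iff_repr_mem ℤ x).mp hx.1 i
    rw [hf]; simp only
    rw [← hk]
    norm_num [Int.floor_intCast]
  have hbound : ∀ x ∈ S, ∀ i, |b.repr x i| ≤ C₀ * R := by
    intro x hx i
    have h1 : |b.repr x i| = ‖φ x i‖ := by
      rw [Real.norm_eq_abs]; rfl
    have h2 : ‖φ x i‖ ≤ ‖φ x‖ := norm_le_pi_norm _ i
    have h4 : ‖φ x‖ ≤ C₀ * ‖x‖ := φ.le_opNorm x
    have h5 : ‖x‖ ≤ R := by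
      have := hx.2; rwa [Metric.mem_closedBall, dist_zero_right] at this
    have h6 : 0 ≤ ‖x‖ := norm_nonneg x
    rw [h1]; nlinarith
  set T : Finset (ι → ℤ) := Fintype.piFinset fun _ => Finset.Icc (-m) m with hT
  have hmaps : ∀ x ∈ S, f x ∈ (T : Set (ι → ℤ)) := by
    intro x hx
    simp only [hT, Finset.coe_sort_coe, Finset.mem_coe, Fintype.mem_piFinset, Finset.mem_Icc]
    intro i
    have h := hbound x hx i
    rw [hint x hx i] at h
    rw [abs_le] at h
    constructor
    · rw [neg_le]
      exact Int.le_floor.mpr (by push_cast; linarith [h.1])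
    · exact Int.le_floor.mpr (by push_cast; linarith [h.2])
  have hinj : Set.InjOn f S := by
    intro x hx y hy hxy
    refine b.ext_elem fun i => ?_
    rw [hint x hx i, hint y hy i, hxy]
  have hfin : S.Finite :=
    Set.Finite.of_finite_image ((T.finite_toSet).subset (Set.image_subset_iff.mpr hmaps)) hinj
  refine ⟨hfin, ?_⟩
  have hcount : S.ncard ≤ T.card := by
    have := Set.ncard_le_ncard_of_injOn f hmaps hinj T.finite_toSet
    simpa [Set.ncard_coe_finset] using this
  have hTcard : T.card = ((2*m+1).toNat) ^ (Fintype.card ι) := by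
    rw [hT, Fintype.card_piFinset]
    simp [Int.card_Icc]
    congr 1
    omega
  calc (S.ncard : ℝ) ≤ (T.card : ℝ) := by exact_mod_cast hcount
    _ = (((2*m+1).toNat : ℤ) : ℝ) ^ (Fintype.card ι) := by rw [hTcard]; push_cast; ring
    _ ≤ (2*C₀+3)^(Fintype.card ι) * R ^ (Fintype.card ι) := by
        rw [← mul_pow]
        refine pow_le_pow_left₀ (by positivity) ?_ _
        have h1 : ((2*m+1).toNat : ℤ) = 2*m+1 := Int.toNat_of_nonneg (by omega)
        have h2 : (m : ℝ) ≤ C₀ * R := Int.floor_le _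
        rw [h1]
        push_cast
        nlinarith

section Main

variable (n : ℕ) (K : Type) [Field K] [NumberField K] [Algebra Qi K]
  (σ : Fin n → (K →ₐ[Qi] ℂ))


variable (n : ℕ) (K : Type) [Field K] [NumberField K] [Algebra Qi K]
  (σ : Fin n → (K →ₐ[Qi] ℂ))

lemma surj_places (hσall : ∀ φ : K →ₐ[Qi] ℂ, ∃ i, φ = σ i) (w : InfinitePlace K) :
    ∃ i : Fin n, InfinitePlace.mk (σ i).toRingHom = w := by
  set φ := w.embedding with hφ
  rcases Qi_hom_cases (φ.comp (algebraMap Qi K)) with h | h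
  · have := hσall ⟨φ, fun c => by simpa using h c⟩
    obtain ⟨i, hi⟩ := this
    exact ⟨i, by rw [← hi]; exact mk_embedding w⟩
  · set φ₂ := (starRingEnd ℂ).comp φ with hφ₂
    have hres : ∀ c : Qi, φ₂ (algebraMap Qi K c) = (c : ℂ) := by
      intro c
      simp only [hφ₂, RingHom.coe_comp, Function.comp_apply]
      rw [show φ (algebraMap Qi K c) = starRingEnd ℂ (c : ℂ) from h c]
      exact Complex.conj_conj _
    obtain ⟨i, hi⟩ := hσall ⟨φ₂, fun c => by simpa using hres c⟩
    refine ⟨i, ?_⟩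
    have h1 : (σ i).toRingHom = φ₂ := by rw [← hi]
    have h2 : φ₂ = NumberField.ComplexEmbedding.conjugate φ := rfl
    rw [h1, h2, mk_conjugate_eq, mk_embedding]

lemma inj_places (hσinj : Function.Injective σ) :
    Function.Injective (fun i => InfinitePlace.mk (σ i).toRingHom) := by
  intro i j hij
  simp only at hij
  rcases mk_eq_iff.mp hij with h | h
  · refine hσinj ?_
    ext x
    exact RingHom.congr_fun h x
  · exfalso
    have h1 := congrFun (congrArg DFunLike.coe h) (algebraMap Qi K ⟨Complex.I, hImem⟩)
    have h2 : (σ i) (algebraMap Qi K ⟨Complex.I, hImem⟩) = Complex.I := by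
      rw [AlgHom.commutes]; rfl
    have h3 : (σ j) (algebraMap Qi K ⟨Complex.I, hImem⟩) = Complex.I := by
      rw [AlgHom.commutes]; rfl
    have h4 : NumberField.ComplexEmbedding.conjugate (σ i).toRingHom
        (algebraMap Qi K ⟨Complex.I, hImem⟩) = starRingEnd ℂ (Complex.I) := by
      rw [NumberField.ComplexEmbedding.conjugate_coe_eq]
      exact congrArg _ h2
    rw [h4] at h1
    rw [show ((σ j).toRingHom) (algebraMap Qi K ⟨Complex.I, hImem⟩)
      = Complex.I from h3] at h1
    rw [Complex.conj_I] at h1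
    exact Complex.I_ne_zero (by linear_combination -h1/2)


end Main

set_option maxHeartbeats 2000000 in
/-- Let `K` be a degree-`n` extension of `ℚ(i)` (a totally complex number field), with the `n`
embeddings `σ₁,…,σₙ : K → ℂ` fixing `ℚ(i)`, and `ψ(x) = diag(σ₁ x, …, σₙ x)`.  Then there is a
constant `N` such that for all `M ≥ 2`, the number of units `u` of the ring of integers of `K`
with `‖ψ(u)‖_F ≤ M` is at most `N·(log M)^(n−1)`. -/
theorem unit_count_log_bound (n : ℕ) (hn : 0 < n) (K : Type) [Field K] [NumberField K]
    [Algebra Qi K] (hrank : Module.finrank Qi K = n)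
    (σ : Fin n → (K →ₐ[Qi] ℂ)) (hσinj : Function.Injective σ)
    (hσall : ∀ φ : K →ₐ[Qi] ℂ, ∃ i, φ = σ i) :
    ∃ N : ℝ, ∀ M : ℝ, 2 ≤ M →
      (({u : (NumberField.RingOfIntegers K)ˣ |
        Real.sqrt (∑ i, ‖σ i ((u : NumberField.RingOfIntegers K) : K)‖ ^ 2) ≤ M}).ncard : ℝ)
      ≤ N * Real.log M ^ (n - 1) := by
  classical
  -- the infinite places are exactly the mk (σ i)
  have hcard : Fintype.card (InfinitePlace K) = n := by
    rw [← Fintype.card_fin n]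
    exact (Fintype.card_congr (Equiv.ofBijective _
      ⟨inj_places n K σ hσinj, fun w => surj_places n K σ hσall w⟩)).symm
  have hrk : rank K = n - 1 := by rw [rank, hcard]
  -- the lattice basis
  let b := (basisUnitLattice K).ofZLatticeBasis ℝ
  obtain ⟨C, hC, hCount⟩ := lattice_count b
  have hspan : (Submodule.span ℤ (Set.range ⇑b) : Submodule ℤ _) = unitLattice K :=
    (basisUnitLattice K).ofZLatticeBasis_span ℝ
  have hcard' : Fintype.card (Fin (rank K)) = n - 1 := by rw [Fintype.card_fin, hrk]
  set t : ℕ := Nat.card (torsion K) with ht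
  refine ⟨t * (C * (2*n+2)^(n-1)), fun M hM => ?_⟩
  have hM0 : (0:ℝ) < M := by linarith
  have hlogM : 0 < Real.log M := Real.log_pos (by linarith)
  have hlog2 : (0.6931471803 : ℝ) < Real.log M :=
    lt_of_lt_of_le Real.log_two_gt_d9 (Real.log_le_log (by norm_num) hM)
  set R : ℝ := (2*n+2) * Real.log M with hR
  have hR1 : 1 ≤ R := by
    rw [hR]
    have hn4 : (4:ℝ) ≤ 2*n+2 := by
      have : (1:ℝ) ≤ n := by exact_mod_cast hn
      linarith
    nlinarith
  obtain ⟨hPfin, hPcard⟩ := hCount R hR1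
  rw [hspan] at hPfin hPcard
  set P : Set ({w : InfinitePlace K // w ≠ (w₀ : InfinitePlace K)} → ℝ) :=
    (unitLattice K : Set _) ∩ Metric.closedBall 0 R with hPdef
  set S : Set (𝓞 K)ˣ := {u : (𝓞 K)ˣ |
    Real.sqrt (∑ i, ‖σ i ((u : 𝓞 K) : K)‖ ^ 2) ≤ M} with hSdef
  -- all places of u in S are ≤ M
  have hwle : ∀ u ∈ S, ∀ w : InfinitePlace K, w ((u : 𝓞 K) : K) ≤ M := by
    intro u hu w
    obtain ⟨i, hi⟩ := surj_places n K σ hσall w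
    rw [← hi, InfinitePlace.apply]
    have h2 : ‖σ i ((u : 𝓞 K) : K)‖^2 ≤
        ∑ j, ‖σ j ((u : 𝓞 K) : K)‖ ^ 2 :=
      Finset.single_le_sum (f := fun j => ‖σ j ((u : 𝓞 K) : K)‖ ^ 2) (fun j _ => sq_nonneg _) (Finset.mem_univ i)
    calc ‖σ i ((u : 𝓞 K) : K)‖
        = Real.sqrt (‖σ i ((u : 𝓞 K) : K)‖^2) :=
          (Real.sqrt_sq (norm_nonneg _)).symm
      _ ≤ Real.sqrt (∑ j, ‖σ j ((u : 𝓞 K) : K)‖ ^ 2) := Real.sqrt_le_sqrt h2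
      _ ≤ M := hu
  -- logEmbedding of u ∈ S is in the ball of radius R
  have hA : ∀ u ∈ S, ∀ w : InfinitePlace K,
      (mult w : ℝ) * Real.log (w ((u : 𝓞 K) : K)) ≤ 2 * Real.log M := by
    intro u hu w
    have hm2 : (mult w : ℝ) ≤ 2 := by
      rw [mult]; split_ifs <;> norm_num
    have hm0 : (0:ℝ) ≤ (mult w : ℝ) := Nat.cast_nonneg _
    have hwpos : 0 < w ((u : 𝓞 K) : K) :=
      pos_iff.mpr (coe_ne_zero u)
    have hlog : Real.log (w ((u : 𝓞 K) : K)) ≤ Real.log M :=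
      Real.log_le_log hwpos (hwle u hu w)
    rcases le_or_gt (Real.log (w ((u : 𝓞 K) : K))) 0 with h | h
    · nlinarith
    · nlinarith
  have hlogB : ∀ u ∈ S, logEmbedding K (Additive.ofMul u) ∈ P := by
    intro u hu
    constructor
    · exact Submodule.mem_map.mpr ⟨Additive.ofMul u, Submodule.mem_top, rfl⟩
    · rw [Metric.mem_closedBall, dist_zero_right]
      refine (pi_norm_le_iff_of_nonneg (by linarith)).mpr ?_
      intro w'
      rw [Real.norm_eq_abs, abs_le]
      have hup : logEmbedding K (Additive.ofMul u) w' ≤ 2 * Real.log M := by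
        rw [logEmbedding_component]
        exact hA u hu w'.val
      have hn1 : (1:ℝ) ≤ n := by exact_mod_cast hn
      constructor
      · -- lower bound via sum formula
        have hsum := sum_logEmbedding_component u
        have hsplit : logEmbedding K (Additive.ofMul u) w' =
            (∑ w'', logEmbedding K (Additive.ofMul u) w'') -
            ∑ w'' ∈ Finset.univ.erase w', logEmbedding K (Additive.ofMul u) w'' := by
          rw [← Finset.add_sum_erase _ _ (Finset.mem_univ w')]
          ring
        have herase : ∑ w'' ∈ Finset.univ.erase w', logEmbedding K (Additive.ofMul u) w''
            ≤ (n : ℝ) * (2 * Real.log M) := by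
          have hcardle : ((Finset.univ.erase w').card : ℝ) ≤ (n : ℝ) := by
            have h1 : (Finset.univ.erase w').card ≤ Fintype.card {w : InfinitePlace K // w ≠ (w₀ : InfinitePlace K)} :=
              le_trans (Finset.card_erase_le) (le_of_eq (Finset.card_univ))
            have h2 : Fintype.card {w : InfinitePlace K // w ≠ (w₀ : InfinitePlace K)} ≤ n := by
              rw [← hcard]; exact Fintype.card_subtype_le _
            exact_mod_cast le_trans h1 h2
          calc ∑ w'' ∈ Finset.univ.erase w', logEmbedding K (Additive.ofMul u) w''
              ≤ ∑ w'' ∈ Finset.univ.erase w', (2 * Real.log M) := by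
                refine Finset.sum_le_sum fun w'' _ => ?_
                rw [logEmbedding_component]
                exact hA u hu w''.val
            _ = ((Finset.univ.erase w').card : ℝ) * (2 * Real.log M) := by
                rw [Finset.sum_const, nsmul_eq_mul]
            _ ≤ (n : ℝ) * (2 * Real.log M) := by nlinarith
        have hsumge : (∑ w'', logEmbedding K (Additive.ofMul u) w'') ≥ -(2 * Real.log M) := by
          rw [hsum]
          have := hA u hu (w₀ : InfinitePlace K)
          push_cast
          nlinarith
        rw [hsplit, hR]
        push_cast
        nlinarith
      · calc logEmbedding K (Additive.ofMul u) w' ≤ 2 * Real.log M := hup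
          _ ≤ R := by rw [hR]; nlinarith
  -- fibers of logEmbedding have at most t elements
  have hfiber : ∀ x, ({u : (𝓞 K)ˣ | logEmbedding K (Additive.ofMul u) = x}).Finite ∧
      ({u : (𝓞 K)ˣ | logEmbedding K (Additive.ofMul u) = x}).ncard ≤ t := by
    intro x
    set F : Set (𝓞 K)ˣ := {u : (𝓞 K)ˣ | logEmbedding K (Additive.ofMul u) = x} with hF
    rcases Set.eq_empty_or_nonempty F with h | ⟨u₀, hu₀⟩
    · simp [h]
    · have hsub : F ⊆ (fun z : torsion K => ((z : (𝓞 K)ˣ) * u₀)) '' Set.univ := by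
        intro u hu
        have hz : u * u₀⁻¹ ∈ torsion K := by
          rw [← logEmbedding_eq_zero_iff]
          have hd : logEmbedding K (Additive.ofMul (u * u₀⁻¹)) =
              logEmbedding K (Additive.ofMul u) - logEmbedding K (Additive.ofMul u₀) := by
            have : Additive.ofMul (u * u₀⁻¹) = Additive.ofMul u - Additive.ofMul u₀ := rfl
            rw [this, map_sub]
          rw [hd, Set.mem_setOf_eq.mp hu, Set.mem_setOf_eq.mp hu₀, sub_self]
        exact ⟨⟨u * u₀⁻¹, hz⟩, Set.mem_univ _, by simp⟩
      have himg : ((fun z : torsion K => ((z : (𝓞 K)ˣ) * u₀)) '' Set.univ).Finite :=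
        (Set.finite_univ).image _
      refine ⟨himg.subset hsub, ?_⟩
      calc F.ncard ≤ ((fun z : torsion K => ((z : (𝓞 K)ˣ) * u₀)) '' Set.univ).ncard :=
            Set.ncard_le_ncard hsub himg
        _ ≤ (Set.univ : Set (torsion K)).ncard := Set.ncard_image_le Set.finite_univ
        _ = t := by rw [Set.ncard_univ]
  -- S is finite
  have hSfin : S.Finite := by
    refine Set.Finite.subset (Set.Finite.biUnion hPfin
      (fun x _ => (hfiber x).1)) ?_
    intro u hu
    exact Set.mem_biUnion (hlogB u hu) rfl
  -- counting
  have hmain : (S.ncard : ℝ) ≤ t * (P.ncard : ℝ) := by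
    set s : Finset (𝓞 K)ˣ := hSfin.toFinset with hs
    set g := fun u : (𝓞 K)ˣ => logEmbedding K (Additive.ofMul u) with hg
    have hncard : S.ncard = s.card := Set.ncard_eq_toFinset_card _ hSfin
    have hfibers : ∀ a ∈ s.image g, (s.filter fun u => g u = a).card ≤ t := by
      intro a _
      have hsub : (↑(s.filter fun u => g u = a) : Set (𝓞 K)ˣ) ⊆
          {u : (𝓞 K)ˣ | logEmbedding K (Additive.ofMul u) = a} := by
        intro u hu
        simp only [Finset.coe_filter, Set.mem_setOf_eq] at hu
        exact hu.2
      calc (s.filter fun u => g u = a).card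
          = ((↑(s.filter fun u => g u = a) : Set (𝓞 K)ˣ)).ncard := (Set.ncard_coe_finset _).symm
        _ ≤ ({u : (𝓞 K)ˣ | logEmbedding K (Additive.ofMul u) = a}).ncard :=
            Set.ncard_le_ncard hsub (hfiber a).1
        _ ≤ t := (hfiber a).2
    have hcardle := Finset.card_le_mul_card_image s t hfibers
    have himgsub : s.image g ⊆ hPfin.toFinset := by
      intro y hy
      rcases Finset.mem_image.mp hy with ⟨u, hu, rfl⟩
      rw [Set.Finite.mem_toFinset]
      exact hlogB u ((Set.Finite.mem_toFinset hSfin).mp hu)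
    have himgcard : (s.image g).card ≤ P.ncard := by
      have h1 := Finset.card_le_card himgsub
      have h2 : P.ncard = hPfin.toFinset.card := Set.ncard_eq_toFinset_card _ hPfin
      omega
    have : S.ncard ≤ t * P.ncard := by
      rw [hncard]
      exact le_trans hcardle (Nat.mul_le_mul_left t himgcard)
    exact_mod_cast this
  calc (S.ncard : ℝ) ≤ t * (P.ncard : ℝ) := hmain
    _ ≤ t * (C * R ^ (n-1)) := by
        refine mul_le_mul_of_nonneg_left ?_ (by positivity)
        rw [← hcard']
        exact hPcard
    _ = t * (C * (2*n+2)^(n-1)) * Real.log M ^ (n-1) := by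
        rw [hR, mul_pow]; ring
end

section
/- Let K/ℚ(i) be a degree-n extension with O_K, ψ as above. Then there exists a constant N', independent of M and of x, such that for every nonzero x ∈ O_K with ‖ψ(x)‖_F ≤ M and all M ≥ 2, the number of units u ∈ O_K* with ‖ψ(xu)‖_F ≤ M is at most N'·(log M)^{n−1}. -/
noncomputable def QiI : Qi := ⟨Complex.I, IntermediateField.subset_adjoin ℚ {Complex.I} rfl⟩

theorem ringHom_Qi_eq_val (ψ : Qi →+* ℂ) (hψ : ψ QiI = Complex.I) (z : Qi) : ψ z = (z : ℂ) := by
  obtain ⟨zv, hz⟩ := z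
  induction hz using IntermediateField.adjoin_induction with
  | mem x hx =>
      rcases hx with rfl
      exact hψ
  | algebraMap x =>
      show ψ (algebraMap ℚ Qi x) = _
      rw [show ((algebraMap ℚ Qi) x) = ((x : ℚ) : Qi) from by norm_cast]
      rw [map_ratCast]
      norm_cast
  | add x y hx hy ihx ihy =>
      show ψ (⟨x, hx⟩ + ⟨y, hy⟩) = _
      rw [map_add, ihx, ihy]
  | inv x hx ih =>
      show ψ (⟨x, hx⟩⁻¹) = _
      rw [map_inv₀, ih]
  | mul x y hx hy ihx ihy =>
      show ψ (⟨x, hx⟩ * ⟨y, hy⟩) = _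
      rw [map_mul, ihx, ihy]

open NumberField NumberField.InfinitePlace

section Places

variable {n : ℕ} {K : Type} [Field K] [NumberField K] [Algebra Qi K]
  (σ : Fin n → (K →ₐ[Qi] ℂ))

theorem sigma_algebraMap (i : Fin n) (z : Qi) : σ i (algebraMap Qi K z) = (z : ℂ) := by
  rw [AlgHom.commutes]; rfl

theorem sigma_iK (i : Fin n) : σ i (algebraMap Qi K QiI) = Complex.I := sigma_algebraMap σ i QiI

theorem place_exists (hσall : ∀ φ : K →ₐ[Qi] ℂ, ∃ i, φ = σ i) (w : InfinitePlace K) :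
    ∃ i, ∀ y : K, w y = ‖σ i y‖ := by
  set φ := w.embedding with hφ
  have hiK2 : (algebraMap Qi K QiI) ^ 2 = algebraMap Qi K (QiI ^ 2) := by rw [map_pow]
  have hQiI2 : (QiI : Qi) ^ 2 = -1 := by
    apply Subtype.ext
    push_cast [QiI]
    exact Complex.I_sq
  have key : ∀ ψ : K →+* ℂ, ψ (algebraMap Qi K QiI) = Complex.I →
      ∃ i, (σ i).toRingHom = ψ := by
    intro ψ hψ
    have hcomm : ∀ z : Qi, ψ (algebraMap Qi K z) = algebraMap Qi ℂ z := fun z =>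
      ringHom_Qi_eq_val (ψ.comp (algebraMap Qi K)) hψ z
    obtain ⟨i, hi⟩ := hσall ⟨ψ, hcomm⟩
    exact ⟨i, by rw [← hi]⟩
  have h2 : φ (algebraMap Qi K QiI) ^ 2 = -1 := by
    rw [← map_pow, hiK2, hQiI2]
    simp
  have hcases : φ (algebraMap Qi K QiI) = Complex.I ∨
      φ (algebraMap Qi K QiI) = -Complex.I := by
    have : (φ (algebraMap Qi K QiI) - Complex.I) * (φ (algebraMap Qi K QiI) + Complex.I) = 0 := by
      linear_combination h2 - Complex.I_sq
    rcases mul_eq_zero.mp this with h | h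
    · exact Or.inl (by linear_combination h)
    · exact Or.inr (by linear_combination h)
  rcases hcases with h | h
  · obtain ⟨i, hi⟩ := key φ h
    exact ⟨i, fun y => by rw [← norm_embedding_eq w y, ← hφ]
                          rw [show (σ i) y = φ y from RingHom.congr_fun hi y]⟩
  · obtain ⟨i, hi⟩ := key (NumberField.ComplexEmbedding.conjugate φ) (by
      rw [NumberField.ComplexEmbedding.conjugate_coe_eq, h, map_neg, Complex.conj_I, neg_neg])
    refine ⟨i, fun y => ?_⟩
    rw [← norm_embedding_eq w y, ← hφ,
      show (σ i) y = (NumberField.ComplexEmbedding.conjugate φ) y from RingHom.congr_fun hi y,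
      NumberField.ComplexEmbedding.conjugate_coe_eq]
    simp [Complex.norm_conj]

noncomputable def pl : Fin n → InfinitePlace K := fun i => mk (σ i).toRingHom

theorem pl_apply (i : Fin n) (y : K) : pl σ i y = ‖σ i y‖ := rfl

theorem pl_not_isReal (i : Fin n) : ¬ (pl σ i).IsReal := by
  rw [pl, isReal_mk_iff]
  intro h
  have h1 := RingHom.congr_fun h (algebraMap Qi K QiI)
  rw [NumberField.ComplexEmbedding.conjugate_coe_eq] at h1
  have h2 : (σ i).toRingHom (algebraMap Qi K QiI) = Complex.I := sigma_iK σ i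
  rw [h2] at h1
  simp [Complex.conj_I] at h1
  exact Complex.I_ne_zero (by linear_combination -h1 / 2)

theorem pl_mult (i : Fin n) : mult (pl σ i) = 2 := by
  rw [mult, if_neg (pl_not_isReal σ i)]

theorem pl_bij (hσinj : Function.Injective σ) (hσall : ∀ φ : K →ₐ[Qi] ℂ, ∃ i, φ = σ i) :
    Function.Bijective (pl σ) := by
  constructor
  · intro i j h
    rcases mk_eq_iff.mp h with h' | h'
    · exact hσinj (AlgHom.ext fun y => RingHom.congr_fun h' y)
    · exfalso
      have h1 := RingHom.congr_fun h' (algebraMap Qi K QiI)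
      rw [NumberField.ComplexEmbedding.conjugate_coe_eq] at h1
      have h2 : (σ i).toRingHom (algebraMap Qi K QiI) = Complex.I := sigma_iK σ i
      have h3 : (σ j).toRingHom (algebraMap Qi K QiI) = Complex.I := sigma_iK σ j
      rw [h2, h3, Complex.conj_I] at h1
      exact Complex.I_ne_zero (by linear_combination - h1 / 2)
  · intro w
    obtain ⟨i, hi⟩ := place_exists σ hσall w
    exact ⟨i, Subtype.ext (AbsoluteValue.ext fun y => (hi y).symm)⟩

theorem card_places (hσinj : Function.Injective σ) (hσall : ∀ φ : K →ₐ[Qi] ℂ, ∃ i, φ = σ i) :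
    Fintype.card (InfinitePlace K) = n := by
  rw [← Fintype.card_of_bijective (pl_bij σ hσinj hσall), Fintype.card_fin]

theorem prod_sq (hσinj : Function.Injective σ) (hσall : ∀ φ : K →ₐ[Qi] ℂ, ∃ i, φ = σ i)
    (x : K) : ∏ i, ‖σ i x‖ ^ 2 = |Algebra.norm ℚ x| := by
  rw [← prod_eq_abs_norm]
  refine Fintype.prod_bijective (pl σ) (pl_bij σ hσinj hσall) _ _ fun i => ?_
  rw [pl_mult, pl_apply]

end Places

section Places2

variable {n : ℕ} {K : Type} [Field K] [NumberField K] [Algebra Qi K]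
  (σ : Fin n → (K →ₐ[Qi] ℂ))

theorem one_le_prod_sq (hσinj : Function.Injective σ)
    (hσall : ∀ φ : K →ₐ[Qi] ℂ, ∃ i, φ = σ i) (x : NumberField.RingOfIntegers K) (hx : x ≠ 0) :
    1 ≤ ∏ i, ‖σ i (x : K)‖ ^ 2 := by
  rw [prod_sq σ hσinj hσall]
  rw [← Algebra.coe_norm_int, ← Int.cast_one, ← Int.cast_abs, Rat.cast_intCast, Int.cast_le]
  exact Int.one_le_abs (Algebra.norm_ne_zero_iff.mpr hx)

theorem prod_sq_unit (hσinj : Function.Injective σ)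
    (hσall : ∀ φ : K →ₐ[Qi] ℂ, ∃ i, φ = σ i) (u : (NumberField.RingOfIntegers K)ˣ) :
    ∏ i, ‖σ i (u : K)‖ ^ 2 = 1 := by
  rw [prod_sq σ hσinj hσall]
  rw [_root_.NumberField.Units.norm (K := K) u]; norm_num

theorem each_le_of_sqrt_sum {M : ℝ} (hM : 0 ≤ M) {y : K}
    (h : Real.sqrt (∑ i, ‖σ i y‖ ^ 2) ≤ M) (i : Fin n) :
    ‖σ i y‖ ≤ M := by
  have hs : ∑ j, ‖σ j y‖ ^ 2 ≤ M ^ 2 := by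
    have h1 := Real.sq_sqrt (show (0:ℝ) ≤ ∑ j, ‖σ j y‖ ^ 2 by positivity)
    nlinarith [Real.sqrt_nonneg (∑ j, ‖σ j y‖ ^ 2)]
  have h2 : ‖σ i y‖ ^ 2 ≤ M ^ 2 := by
    refine le_trans ?_ hs
    exact Finset.single_le_sum (f := fun j => ‖σ j y‖ ^ 2)
      (fun j _ => by positivity) (Finset.mem_univ i)
  nlinarith [norm_nonneg (σ i y)]

end Places2

set_option maxHeartbeats 1000000
set_option synthInstance.maxHeartbeats 400000

open NumberField.Units NumberField.Units.dirichletUnitTheorem Module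

/-- Let `K/ℚ(i)` be a degree-`n` extension with embeddings `σ₁,…,σₙ` fixing `ℚ(i)` and
`ψ(x) = diag(σ₁ x,…,σₙ x)`.  There is a constant `N'`, independent of `M` and of `x`, such
that for every `M ≥ 2` and every nonzero algebraic integer `x` of `K` with `‖ψ(x)‖_F ≤ M`,
the number of units `u` with `‖ψ(x·u)‖_F ≤ M` is at most `N'·(log M)^(n−1)`. -/
theorem unit_orbit_count_log_bound (n : ℕ) (hn : 0 < n) (K : Type) [Field K] [NumberField K]
    [Algebra Qi K] (hrank : Module.finrank Qi K = n)
    (σ : Fin n → (K →ₐ[Qi] ℂ)) (hσinj : Function.Injective σ)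
    (hσall : ∀ φ : K →ₐ[Qi] ℂ, ∃ i, φ = σ i) :
    ∃ N' : ℝ, ∀ M : ℝ, 2 ≤ M → ∀ x : NumberField.RingOfIntegers K, x ≠ 0 →
      Real.sqrt (∑ i, ‖σ i (x : K)‖ ^ 2) ≤ M →
      (({u : (NumberField.RingOfIntegers K)ˣ |
        Real.sqrt (∑ i, ‖σ i ((x * (u : NumberField.RingOfIntegers K) :
          NumberField.RingOfIntegers K) : K)‖ ^ 2) ≤ M}).ncard : ℝ)
      ≤ N' * Real.log M ^ (n - 1) := by
  classical
  -- setup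
  set L := unitLattice K with hL
  set E := ({w : NumberField.InfinitePlace K // w ≠ NumberField.Units.dirichletUnitTheorem.w₀} → ℝ) with hE
  have hcard : Fintype.card (NumberField.InfinitePlace K) = n := card_places σ hσinj hσall
  have hrankK : Units.rank K = n - 1 := by rw [Units.rank, hcard]
  let b := Module.Free.chooseBasis ℤ L
  let b' : Basis (Module.Free.ChooseBasisIndex ℤ L) ℝ E := b.ofZLatticeBasis ℝ L
  have hcardι : Fintype.card (Module.Free.ChooseBasisIndex ℤ L) = n - 1 := by
    rw [← Module.finrank_eq_card_chooseBasisIndex, unitLattice_rank, hrankK]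
  let G : E →L[ℝ] (Module.Free.ChooseBasisIndex ℤ L → ℝ) :=
    LinearMap.toContinuousLinearMap (b'.equivFun : E ≃ₗ[ℝ] _).toLinearMap
  set C : ℝ := ‖G‖ with hC
  have hC0 : 0 ≤ C := by rw [hC]; exact norm_nonneg G
  haveI : Fintype (torsion K) := Fintype.ofFinite _
  set t : ℕ := Fintype.card (torsion K) with ht
  refine ⟨(t : ℝ) * ((2 * C + 3) * (4 * n ^ 2)) ^ (n - 1), ?_⟩
  intro M hM x hx hxM
  have hM0 : (0:ℝ) < M := by linarith
  have hM1 : (1:ℝ) ≤ M := by linarith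
  have hlog : 0 < Real.log M := Real.log_pos (by linarith)
  set S : Set (NumberField.RingOfIntegers K)ˣ := {u : (NumberField.RingOfIntegers K)ˣ |
        Real.sqrt (∑ i, ‖σ i ((x * (u : NumberField.RingOfIntegers K) :
          NumberField.RingOfIntegers K) : K)‖ ^ 2) ≤ M} with hS
  -- bounds on |σ i u| for u ∈ S
  have hxi : ∀ i, ‖σ i (x : K)‖ ≤ M := each_le_of_sqrt_sum σ hM0.le hxM
  have hx1 : (1:ℝ) ≤ ∏ i, ‖σ i (x : K)‖ ^ 2 :=
    one_le_prod_sq σ hσinj hσall x hx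
  have hxipos : ∀ i, 0 < ‖σ i (x : K)‖ := by
    intro i
    have : σ i (x : K) ≠ 0 := by
      simp only [map_ne_zero]
      exact (NumberField.RingOfIntegers.coe_ne_zero_iff).mpr hx
    exact norm_pos_iff.mpr this
  have hcoe_mul : ∀ u : (NumberField.RingOfIntegers K)ˣ, ∀ i,
      ‖σ i ((x * (u : NumberField.RingOfIntegers K) :
        NumberField.RingOfIntegers K) : K)‖
      = ‖σ i (x : K)‖ *
        ‖σ i ((u : NumberField.RingOfIntegers K) : K)‖ := by
    intro u i
    rw [show ((x * (u : NumberField.RingOfIntegers K) : NumberField.RingOfIntegers K) : K)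
        = (x : K) * ((u : NumberField.RingOfIntegers K) : K) by push_cast; ring]
    rw [map_mul, norm_mul]
  have hu_up : ∀ u ∈ S, ∀ i, ‖σ i ((u : NumberField.RingOfIntegers K) : K)‖
      ≤ M ^ (2 * n) := by
    intro u hu i
    have hxu : ∀ j, ‖σ j ((x * (u : NumberField.RingOfIntegers K) :
        NumberField.RingOfIntegers K) : K)‖ ≤ M := each_le_of_sqrt_sum σ hM0.le hu
    set a : ℝ := ‖σ i (x : K)‖ with ha
    set bb : ℝ := ‖σ i ((u : NumberField.RingOfIntegers K) : K)‖ with hbb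
    have hab : a * bb ≤ M := by rw [← hcoe_mul u i]; exact hxu i
    have hb0 : 0 ≤ bb := norm_nonneg _
    set P : ℝ := M ^ (2 * (n - 1)) with hP
    have hP0 : 0 < P := by positivity
    have h1le : 1 ≤ a ^ 2 * P := by
      refine le_trans hx1 ?_
      rw [← Finset.mul_prod_erase Finset.univ _ (Finset.mem_univ i)]
      refine mul_le_mul_of_nonneg_left ?_ (sq_nonneg a)
      refine le_trans (Finset.prod_le_prod (fun j _ => by positivity)
        (fun j _ => pow_le_pow_left₀ (norm_nonneg _) (hxi j) 2)) ?_
      rw [Finset.prod_const, Finset.card_erase_of_mem (Finset.mem_univ i),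
        Finset.card_univ, Fintype.card_fin, hP, pow_mul]
    have step1 : bb ≤ bb * (a ^ 2 * P) := le_mul_of_one_le_right hb0 h1le
    have step3 : (a * bb) * (a * P) ≤ M * (M * P) := by
      have hap : a * P ≤ M * P := by nlinarith [hxi i]
      exact mul_le_mul hab hap (by positivity) hM0.le
    have hexp : M ^ (2 * n) = M ^ 2 * P := by
      rw [hP, ← pow_add]
      congr 1
      omega
    nlinarith [step1, step3]
  have hbu1 : ∀ u : (NumberField.RingOfIntegers K)ˣ,
      ∏ j, ‖σ j ((u : NumberField.RingOfIntegers K) : K)‖ ^ 2 = 1 := by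
    intro u
    exact prod_sq_unit σ hσinj hσall u
  have hu_low : ∀ u ∈ S, ∀ i, (M ^ (2 * n ^ 2))⁻¹ ≤
      ‖σ i ((u : NumberField.RingOfIntegers K) : K)‖ := by
    intro u hu i
    set bb : ℝ := ‖σ i ((u : NumberField.RingOfIntegers K) : K)‖ with hbb
    have hb0 : 0 ≤ bb := norm_nonneg _
    rw [inv_eq_one_div, div_le_iff₀ (by positivity)]
    have key : 1 ≤ bb ^ 2 * (M ^ (2 * n)) ^ (2 * (n - 1)) := by
      rw [← hbu1 u, ← Finset.mul_prod_erase Finset.univ _ (Finset.mem_univ i)]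
      refine mul_le_mul_of_nonneg_left ?_ (sq_nonneg bb)
      refine le_trans (Finset.prod_le_prod (fun j _ => by positivity)
        (fun j _ => pow_le_pow_left₀ (norm_nonneg _) (hu_up u hu j) 2)) ?_
      rw [Finset.prod_const, Finset.card_erase_of_mem (Finset.mem_univ i),
        Finset.card_univ, Fintype.card_fin, ← pow_mul, ← pow_mul]
    have hsq : 1 ≤ (bb * M ^ (2 * n * (n - 1))) ^ 2 := by
      calc (1:ℝ) ≤ bb ^ 2 * (M ^ (2 * n)) ^ (2 * (n - 1)) := key
      _ = (bb * M ^ (2 * n * (n - 1))) ^ 2 := by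
          rw [← pow_mul, mul_pow, ← pow_mul]
          ring_nf
    have h1 : 1 ≤ bb * M ^ (2 * n * (n - 1)) := by
      nlinarith [mul_nonneg hb0 (le_of_lt (pow_pos hM0 (2 * n * (n - 1))))]
    calc (1:ℝ) ≤ bb * M ^ (2 * n * (n - 1)) := h1
    _ ≤ bb * M ^ (2 * n ^ 2) := by
        have h' : 2 * n * (n - 1) ≤ 2 * n ^ 2 := by nlinarith [Nat.sub_le n 1]
        exact mul_le_mul_of_nonneg_left (pow_le_pow_right₀ hM1 h') hb0
  -- log embedding bound
  set R : ℝ := 4 * n ^ 2 * Real.log M with hR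
  have hn1 : (1:ℝ) ≤ (n:ℝ) := by exact_mod_cast hn
  have hlog2 : (0.6931471803:ℝ) < Real.log 2 := Real.log_two_gt_d9
  have hlogM2 : Real.log 2 ≤ Real.log M := by
    rw [Real.log_le_log_iff (by norm_num) hM0]; exact hM
  have hR1 : 1 ≤ R := by
    rw [hR]
    nlinarith
  have hR0 : 0 ≤ R := by linarith
  have hlogbound : ∀ u ∈ S, ‖logEmbedding K (Additive.ofMul u)‖ ≤ R := by
    intro u hu
    rw [pi_norm_le_iff_of_nonneg hR0]
    intro w
    obtain ⟨i, hi⟩ := place_exists σ hσall w.1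
    set c : ℝ := ‖σ i ((u : NumberField.RingOfIntegers K) : K)‖ with hc
    have hb_up : c ≤ M ^ (2 * n) := hu_up u hu i
    have hb_low : (M ^ (2 * n ^ 2))⁻¹ ≤ c := hu_low u hu i
    have hc0 : 0 < c := lt_of_lt_of_le (by positivity) hb_low
    have hcomp : logEmbedding K (Additive.ofMul u) w
        = (NumberField.InfinitePlace.mult w.1 : ℝ) * Real.log (w.1 (u : K)) := rfl
    have hwu : w.1 (u : K) = c := hi _
    have hlogc_up : Real.log c ≤ 2 * (n:ℝ) ^ 2 * Real.log M := by
      have h1 : Real.log c ≤ Real.log (M ^ (2 * n)) := by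
        rw [Real.log_le_log_iff hc0 (by positivity)]; exact hb_up
      rw [Real.log_pow] at h1
      push_cast at h1
      nlinarith
    have hlogc_low : -(2 * (n:ℝ) ^ 2 * Real.log M) ≤ Real.log c := by
      have h1 : Real.log ((M ^ (2 * n ^ 2))⁻¹) ≤ Real.log c := by
        rw [Real.log_le_log_iff (by positivity) hc0]; exact hb_low
      rw [Real.log_inv, Real.log_pow] at h1
      push_cast at h1
      nlinarith
    have habs : |Real.log c| ≤ 2 * (n:ℝ) ^ 2 * Real.log M :=
      abs_le.mpr ⟨hlogc_low, hlogc_up⟩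
    have hmult : (NumberField.InfinitePlace.mult w.1 : ℝ) ≤ 2 := by
      rw [NumberField.InfinitePlace.mult]
      split_ifs <;> norm_num
    rw [Real.norm_eq_abs, hcomp, hwu, abs_mul, Nat.abs_cast]
    calc (NumberField.InfinitePlace.mult w.1 : ℝ) * |Real.log c|
        ≤ 2 * (2 * (n:ℝ) ^ 2 * Real.log M) := by
          refine mul_le_mul hmult habs (abs_nonneg _) (by norm_num)
    _ = R := by rw [hR]; ring
  -- S is finite
  have hSfin : S.Finite := by
    have hfin := NumberField.Embeddings.finite_of_norm_le K ℂ M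
    refine Set.Finite.of_finite_image (f := fun u : (NumberField.RingOfIntegers K)ˣ =>
      ((x * (u : NumberField.RingOfIntegers K) : NumberField.RingOfIntegers K) : K)) ?_ ?_
    · refine Set.Finite.subset hfin ?_
      rintro _ ⟨u, hu, rfl⟩
      refine ⟨NumberField.RingOfIntegers.isIntegral_coe _, fun φ => ?_⟩
      obtain ⟨i, hi⟩ := place_exists σ hσall (NumberField.InfinitePlace.mk φ)
      have h1 : ‖φ ((x * (u : NumberField.RingOfIntegers K) :
          NumberField.RingOfIntegers K) : K)‖
          = (NumberField.InfinitePlace.mk φ) ((x * (u : NumberField.RingOfIntegers K) :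
            NumberField.RingOfIntegers K) : K) := rfl
      rw [h1, hi _]
      exact each_le_of_sqrt_sum σ hM0.le hu i
    · intro u1 h1 u2 h2 heq
      simp only at heq
      have h3 : x * (u1 : NumberField.RingOfIntegers K)
          = x * (u2 : NumberField.RingOfIntegers K) :=
        NumberField.RingOfIntegers.eq_iff.mp heq
      have h4 : (u1 : NumberField.RingOfIntegers K) = (u2 : NumberField.RingOfIntegers K) :=
        mul_left_cancel₀ hx h3
      exact Units.ext h4
  -- counting
  set f : (NumberField.RingOfIntegers K)ˣ → E := fun u => logEmbedding K (Additive.ofMul u)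
    with hf
  set s : Finset (NumberField.RingOfIntegers K)ˣ := hSfin.toFinset with hs'
  have hmem : ∀ u, u ∈ s ↔ u ∈ S := fun u => hSfin.mem_toFinset
  have hfiber : ∀ a ∈ s.image f, (s.filter fun u => f u = a).card ≤ t := by
    intro a _
    set P := s.filter fun u => f u = a with hP
    rcases P.eq_empty_or_nonempty with hPe | hPne
    · simp [hPe]
    obtain ⟨u₀, hu₀⟩ := hPne
    have key : ∀ v ∈ P, u₀⁻¹ * v ∈ torsion K := by
      intro v hv
      rw [← logEmbedding_eq_zero_iff]
      have h0 : f u₀ = a := (Finset.mem_filter.mp hu₀).2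
      have h1 : f v = a := (Finset.mem_filter.mp hv).2
      have h2 : Additive.ofMul (u₀⁻¹ * v) = -Additive.ofMul u₀ + Additive.ofMul v := rfl
      rw [h2, map_add, map_neg]
      show -f u₀ + f v = 0
      rw [h0, h1, neg_add_cancel]
    have hPcard : P.card = Fintype.card {v // v ∈ P} := (Fintype.card_coe P).symm
    rw [hPcard, ht]
    refine Fintype.card_le_of_injective
      (fun v => (⟨u₀⁻¹ * v.1, key v.1 v.2⟩ : torsion K)) ?_
    intro v1 v2 h12
    have h13 := congrArg Subtype.val h12
    simp only at h13
    exact Subtype.ext (mul_left_cancel h13)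
  have h1 : s.card ≤ t * (s.image f).card := Finset.card_le_mul_card_image s t hfiber
  set m : ℤ := ⌈C * R⌉ with hm
  have hm0 : 0 ≤ m := Int.ceil_nonneg (by positivity)
  have h2 : (s.image f).card ≤ ((2 * m + 1).toNat) ^ (n - 1) := by
    have hmaps : ∀ v ∈ s.image f, G v ∈ Fintype.piFinset
        (fun _ : Module.Free.ChooseBasisIndex ℤ L =>
          (Finset.Icc (-m) m).image (fun c : ℤ => (c : ℝ))) := by
      intro v hv
      obtain ⟨u, hus, rfl⟩ := Finset.mem_image.mp hv
      have hvL : f u ∈ L :=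
        Submodule.mem_map.mpr ⟨Additive.ofMul u, Submodule.mem_top, rfl⟩
      rw [Fintype.mem_piFinset]
      intro i
      rw [Finset.mem_image]
      have hGb : G (f u) i = ((b.repr ⟨f u, hvL⟩ i : ℤ) : ℝ) := by
        show b'.equivFun (f u) i = _
        rw [Basis.equivFun_apply]
        exact Basis.ofZLatticeBasis_repr_apply ℝ L b ⟨f u, hvL⟩ i
      have habs : |G (f u) i| ≤ C * R := by
        have ha1 : ‖G (f u) i‖ ≤ ‖G (f u)‖ := norm_le_pi_norm (G (f u)) i
        have ha2 : ‖G (f u)‖ ≤ C * ‖f u‖ := G.le_opNorm (f u)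
        have ha3 : ‖f u‖ ≤ R := hlogbound u ((hmem u).mp hus)
        rw [Real.norm_eq_abs] at ha1
        refine le_trans ha1 (le_trans ha2 ?_)
        exact mul_le_mul_of_nonneg_left ha3 hC0
      refine ⟨b.repr ⟨f u, hvL⟩ i, ?_, hGb.symm⟩
      rw [hGb] at habs
      rw [Finset.mem_Icc]
      constructor
      · have : -(C * R) ≤ ((b.repr ⟨f u, hvL⟩ i : ℤ) : ℝ) := by
          have := abs_le.mp habs; linarith [this.1]
        have h5 : ((-m : ℤ) : ℝ) ≤ ((b.repr ⟨f u, hvL⟩ i : ℤ) : ℝ) := by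
          push_cast
          refine le_trans ?_ this
          simp only [neg_le_neg_iff]
          exact Int.le_ceil _
        exact_mod_cast h5
      · have h4 : ((b.repr ⟨f u, hvL⟩ i : ℤ) : ℝ) ≤ C * R := (abs_le.mp habs).2
        have h5 : ((b.repr ⟨f u, hvL⟩ i : ℤ) : ℝ) ≤ ((m : ℤ) : ℝ) :=
          le_trans h4 (Int.le_ceil _)
        exact_mod_cast h5
    have hinj : Set.InjOn G ↑(s.image f) := by
      intro a _ c _ h
      exact b'.equivFun.injective h
    refine le_trans (Finset.card_le_card_of_injOn G hmaps hinj) ?_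
    rw [Fintype.card_piFinset]
    rw [Finset.prod_const, Finset.card_univ, hcardι]
    refine Nat.pow_le_pow_left ?_ _
    refine le_trans (Finset.card_image_le) ?_
    rw [Int.card_Icc]
    apply le_of_eq
    congr 1
    omega
  have hcount : (S.ncard : ℝ) ≤ (t : ℝ) * ((2 * C + 3) * R) ^ (n - 1) := by
    have hcast : (S.ncard : ℝ) = (s.card : ℝ) := by
      rw [Set.ncard_eq_toFinset_card S hSfin]
    rw [hcast]
    have hchain : (s.card : ℝ) ≤ (t : ℝ) * (((2 * m + 1).toNat : ℕ) : ℝ) ^ (n - 1) := by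
      have := le_trans h1 (Nat.mul_le_mul_left t h2)
      exact_mod_cast this
    refine le_trans hchain ?_
    refine mul_le_mul_of_nonneg_left ?_ (by positivity)
    refine pow_le_pow_left₀ (by positivity) ?_ _
    have hmR : (m : ℝ) ≤ C * R + 1 := le_of_lt (Int.ceil_lt_add_one _)
    have h0 : ((2 * m + 1).toNat : ℤ) = 2 * m + 1 := Int.toNat_of_nonneg (by omega)
    have htn : (((2 * m + 1).toNat : ℕ) : ℝ) = ((2 * m + 1 : ℤ) : ℝ) := by
      rw [show (((2 * m + 1).toNat : ℕ) : ℝ) = (((2 * m + 1).toNat : ℤ) : ℝ) from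
        (Int.cast_natCast _).symm, h0]
    rw [htn]
    push_cast
    nlinarith
  refine hcount.trans ?_
  rw [hR]
  rw [show ((2 * C + 3) * (4 * ↑n ^ 2 * Real.log M)) ^ (n-1)
      = ((2 * C + 3) * (4 * ↑n ^ 2)) ^ (n-1) * Real.log M ^ (n-1) by
    rw [← mul_pow]; ring_nf]
  rw [mul_assoc]
end
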